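/- arXiv:math/0109088 — 4 statements merged into one kernel-verified Lean document; each statement's English description precedes it below -/
import Mathlib

section
/- For any two reduced resolved binary trees of length n there is a finite sequence of primitive arrows transforming one into the other; i.e., the groupoid RRBTree_n is connected. -/
/-- A planar binary tree in which every node (leaf or internal) carries a level. -/
inductive RTree : Type
  | leaf (lvl : ℕ) : RTree
  | node (lvl : ℕ) (l r : RTree) : RTree

namespace RTree

/-- Left-to-right sequence of the levels of all nodes (infix traversal). -/
def seq : RTree → List ℕ
  | leaf k => [k]
  | node k l r => seq l ++ k :: seq r

/-- Left-to-right sequence of the levels of the internal (branch) nodes. -/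
def branchSeq : RTree → List ℕ
  | leaf _ => []
  | node k l r => branchSeq l ++ k :: branchSeq r

/-- Left-to-right sequence of the leaf levels. -/
def leafSeq : RTree → List ℕ
  | leaf k => [k]
  | node _ l r => leafSeq l ++ leafSeq r

/-- Number of leaves. -/
def leafCount : RTree → ℕ
  | leaf _ => 1
  | node _ l r => leafCount l + leafCount r

/-- Every node lies at a strictly lower level than all nodes of its subtrees. -/
def LevelValid : RTree → Prop
  | leaf _ => True
  | node k l r => (∀ m ∈ seq l, k < m) ∧ (∀ m ∈ seq r, k < m) ∧ LevelValid l ∧ LevelValid r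

/-- A resolved binary tree (RB tree) of length `n`: `n` leaves, the `2n - 1`
nodes carry the distinct levels `0, …, 2n - 2` (so the root is at level `0`),
and every internal node lies below both of its children. -/
def IsRB (n : ℕ) (t : RTree) : Prop :=
  leafCount t = n ∧ (seq t).Perm (List.range (2 * n - 1)) ∧ LevelValid t

/-- The level of the root of a tree. -/
def rootLvl : RTree → ℕ
  | leaf k => k
  | node k _ _ => k

/-- Replace the level of the root. -/
def setLvl (m : ℕ) : RTree → RTree
  | leaf _ => leaf m
  | node _ l r => node m l r

/-- Primitive moves on RB trees: reattachment of an edge about a pivot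
(associativity, both directions) and interchange of the levels of the two
children of a common internal node, applied anywhere in the tree. -/
inductive Move : RTree → RTree → Prop
  | assoc (k l : ℕ) (A B C : RTree) :
      Move (node k (node l A B) C) (node k A (node l B C))
  | assocInv (k l : ℕ) (A B C : RTree) :
      Move (node k A (node l B C)) (node k (node l A B) C)
  | interchange (k : ℕ) (x y : RTree) :
      Move (node k x y) (node k (setLvl (rootLvl y) x) (setLvl (rootLvl x) y))
  | congrL (k : ℕ) {l l' : RTree} (r : RTree) : Move l l' → Move (node k l r) (node k l' r)
  | congrR (k : ℕ) (l : RTree) {r r' : RTree} : Move r r' → Move (node k l r) (node k l r')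

/-- A primitive arrow of the groupoid `RBTree`. -/
def MoveRB (n : ℕ) (s t : RTree) : Prop := Move s t ∧ IsRB n s ∧ IsRB n t

end RTree

namespace RTree

/-- A reduced resolved binary tree (RRB tree) of length `n`: an RB tree in
which every branch level is below every leaf level. -/
def IsRRB (n : ℕ) (t : RTree) : Prop :=
  IsRB n t ∧ ∀ b ∈ branchSeq t, ∀ l ∈ leafSeq t, b < l

/-- Primitive moves on RRB trees: edge reattachment, interchange of the levels
of two sibling branches, and interchange of the levels of two sibling leaves. -/
inductive RMove : RTree → RTree → Prop
  | assoc (k l : ℕ) (A B C : RTree) :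
      RMove (node k (node l A B) C) (node k A (node l B C))
  | assocInv (k l : ℕ) (A B C : RTree) :
      RMove (node k A (node l B C)) (node k (node l A B) C)
  | swapBranch (k a b : ℕ) (A B C D : RTree) :
      RMove (node k (node a A B) (node b C D)) (node k (node b A B) (node a C D))
  | swapLeaf (k a b : ℕ) :
      RMove (node k (leaf a) (leaf b)) (node k (leaf b) (leaf a))
  | congrL (k : ℕ) {l l' : RTree} (r : RTree) : RMove l l' → RMove (node k l r) (node k l' r)
  | congrR (k : ℕ) (l : RTree) {r r' : RTree} : RMove r r' → RMove (node k l r) (node k l r')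

/-- A primitive arrow of the groupoid `RRBTree`. -/
def MoveRRB (n : ℕ) (s t : RTree) : Prop := RMove s t ∧ IsRRB n s ∧ IsRRB n t

end RTree
namespace RTree

/-! ### Basic lemmas -/

lemma branch_mem_seq : ∀ t : RTree, ∀ m ∈ branchSeq t, m ∈ seq t := by
  intro t
  induction t with
  | leaf k => simp [branchSeq]
  | node k l r ihl ihr =>
    intro m hm
    simp [branchSeq, seq] at hm ⊢
    rcases hm with h | h | h
    · exact Or.inl (ihl m h)
    · exact Or.inr (Or.inl h)
    · exact Or.inr (Or.inr (ihr m h))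

lemma leaf_mem_seq : ∀ t : RTree, ∀ m ∈ leafSeq t, m ∈ seq t := by
  intro t
  induction t with
  | leaf k => simp [leafSeq, seq]
  | node k l r ihl ihr =>
    intro m hm
    simp [leafSeq, seq] at hm ⊢
    rcases hm with h | h
    · exact Or.inl (ihl m h)
    · exact Or.inr (Or.inr (ihr m h))

lemma seq_perm_branch_leaf : ∀ t : RTree, (seq t).Perm (branchSeq t ++ leafSeq t) := by
  intro t
  induction t with
  | leaf k => simp [seq, branchSeq, leafSeq]
  | node k l r ihl ihr =>
    simp only [seq, branchSeq, leafSeq]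
    refine List.perm_iff_count.2 fun m => ?_
    have h1 := List.perm_iff_count.1 ihl m
    have h2 := List.perm_iff_count.1 ihr m
    simp [List.count_append, List.count_cons] at *
    omega

lemma leafCount_eq_length (t : RTree) : leafCount t = (leafSeq t).length := by
  induction t with
  | leaf k => simp [leafCount, leafSeq]
  | node k l r ihl ihr => simp [leafCount, leafSeq, ihl, ihr]

lemma leafCount_pos (t : RTree) : 0 < leafCount t := by
  induction t with
  | leaf k => simp [leafCount]
  | node k l r ihl ihr => simp [leafCount]; omega

/-! ### RMove preserves the branch and leaf multisets -/

lemma RMove.branch_perm {s t : RTree} (h : RMove s t) :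
    (branchSeq s).Perm (branchSeq t) := by
  induction h with
  | assoc k l A B C =>
    refine List.perm_iff_count.2 fun m => ?_
    simp [branchSeq, List.count_append, List.count_cons]; ring
  | assocInv k l A B C =>
    refine List.perm_iff_count.2 fun m => ?_
    simp [branchSeq, List.count_append, List.count_cons]; ring
  | swapBranch k a b A B C D =>
    refine List.perm_iff_count.2 fun m => ?_
    simp [branchSeq, List.count_append, List.count_cons]; ring
  | swapLeaf k a b => simp [branchSeq]
  | congrL k r h ih => simpa [branchSeq] using ih.append_right _
  | congrR k l h ih => exact ((ih.cons k).append_left _)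

lemma RMove.leaf_perm {s t : RTree} (h : RMove s t) :
    (leafSeq s).Perm (leafSeq t) := by
  induction h with
  | assoc k l A B C => simp [leafSeq]
  | assocInv k l A B C => simp [leafSeq]
  | swapBranch k a b A B C D => simp [leafSeq]
  | swapLeaf k a b =>
    refine List.perm_iff_count.2 fun m => ?_
    simp [leafSeq, List.count_append, List.count_cons]; ring
  | congrL k r h ih => exact ih.append_right _
  | congrR k l h ih => exact ih.append_left _

lemma RMove.seq_perm {s t : RTree} (h : RMove s t) : (seq s).Perm (seq t) :=
  (seq_perm_branch_leaf s).trans ((h.branch_perm.append h.leaf_perm).trans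
    (seq_perm_branch_leaf t).symm)

lemma RMove.symm {s t : RTree} (h : RMove s t) : RMove t s := by
  induction h with
  | assoc k l A B C => exact RMove.assocInv k l A B C
  | assocInv k l A B C => exact RMove.assoc k l A B C
  | swapBranch k a b A B C D => exact RMove.swapBranch k b a A B C D
  | swapLeaf k a b => exact RMove.swapLeaf k b a
  | congrL k r h ih => exact RMove.congrL k r ih
  | congrR k l h ih => exact RMove.congrR k l ih

end RTree
namespace RTree

/-- A primitive move between two level-valid trees. -/
def Step (s t : RTree) : Prop := RMove s t ∧ LevelValid s ∧ LevelValid t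

/-- Reachability by primitive moves through level-valid trees. -/
def Reach : RTree → RTree → Prop := Relation.ReflTransGen Step

lemma Step.symm {s t : RTree} (h : Step s t) : Step t s :=
  ⟨h.1.symm, h.2.2, h.2.1⟩

lemma Reach.refl {s : RTree} : Reach s s := Relation.ReflTransGen.refl

lemma Reach.trans {s t u : RTree} (h : Reach s t) (h' : Reach t u) : Reach s u :=
  Relation.ReflTransGen.trans h h'

lemma Reach.symm {s t : RTree} (h : Reach s t) : Reach t s :=
  by haveI : Std.Symm Step := ⟨fun _ _ h => h.symm⟩; exact Std.Symm.symm (r := Relation.ReflTransGen Step) _ _ h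

lemma Step.reach {s t : RTree} (h : Step s t) : Reach s t :=
  Relation.ReflTransGen.single h

lemma Reach.branch_perm {s t : RTree} (h : Reach s t) :
    (branchSeq s).Perm (branchSeq t) := by
  induction h with
  | refl => exact List.Perm.refl _
  | tail h₁ h₂ ih => exact ih.trans h₂.1.branch_perm

lemma Reach.leaf_perm {s t : RTree} (h : Reach s t) :
    (leafSeq s).Perm (leafSeq t) := by
  induction h with
  | refl => exact List.Perm.refl _
  | tail h₁ h₂ ih => exact ih.trans h₂.1.leaf_perm

lemma Reach.seq_perm {s t : RTree} (h : Reach s t) : (seq s).Perm (seq t) := by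
  induction h with
  | refl => exact List.Perm.refl _
  | tail h₁ h₂ ih => exact ih.trans h₂.1.seq_perm

lemma Reach.valid {s t : RTree} (h : Reach s t) (hs : LevelValid s) :
    LevelValid t := by
  induction h with
  | refl => exact hs
  | tail h₁ h₂ ih => exact h₂.2.2

/-- Lift a reach on the right child. -/
lemma Reach.congrR {r r' : RTree} (k : ℕ) (l : RTree)
    (hv : LevelValid (node k l r)) (h : Reach r r') :
    Reach (node k l r) (node k l r') := by
  induction h with
  | refl => exact Reach.refl
  | @tail b c h₁ h₂ ih =>
    refine Reach.trans ih (Step.reach ?_)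
    obtain ⟨hl, hr, hvl, hvr⟩ := hv
    have hb : ∀ m ∈ seq b, k < m := fun m hm => hr m (((Reach.seq_perm h₁).symm.mem_iff).1 hm)
    have hc : ∀ m ∈ seq c, k < m := fun m hm => hb m ((h₂.1.seq_perm.symm.mem_iff).1 hm)
    exact ⟨RMove.congrR k l h₂.1, ⟨hl, hb, hvl, h₂.2.1⟩, ⟨hl, hc, hvl, h₂.2.2⟩⟩

/-- Lift a reach on the left child. -/
lemma Reach.congrL {l l' : RTree} (k : ℕ) (r : RTree)
    (hv : LevelValid (node k l r)) (h : Reach l l') :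
    Reach (node k l r) (node k l' r) := by
  induction h with
  | refl => exact Reach.refl
  | @tail b c h₁ h₂ ih =>
    refine Reach.trans ih (Step.reach ?_)
    obtain ⟨hl, hr, hvl, hvr⟩ := hv
    have hb : ∀ m ∈ seq b, k < m := fun m hm => hl m (((Reach.seq_perm h₁).symm.mem_iff).1 hm)
    have hc : ∀ m ∈ seq c, k < m := fun m hm => hb m ((h₂.1.seq_perm.symm.mem_iff).1 hm)
    exact ⟨RMove.congrL k r h₂.1, ⟨hb, hr, h₂.2.1, hvr⟩, ⟨hc, hr, h₂.2.2, hvr⟩⟩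

/-- Every branch level is below every leaf level. -/
def Reduced (t : RTree) : Prop := ∀ b ∈ branchSeq t, ∀ x ∈ leafSeq t, b < x

lemma Reach.reduced {s t : RTree} (h : Reach s t) (hs : Reduced s) : Reduced t :=
  fun b hb x hx => hs b (h.branch_perm.symm.mem_iff.1 hb) x (h.leaf_perm.symm.mem_iff.1 hx)

lemma Reduced.left {k : ℕ} {l r : RTree} (h : Reduced (node k l r)) : Reduced l := by
  intro b hb x hx
  exact h b (by simp [branchSeq]; exact Or.inl hb) x (by simp [leafSeq]; exact Or.inl hx)

lemma Reduced.right {k : ℕ} {l r : RTree} (h : Reduced (node k l r)) : Reduced r := by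
  intro b hb x hx
  exact h b (by simp [branchSeq]; tauto) x (by simp [leafSeq]; exact Or.inr hx)

lemma nodup_left {k : ℕ} {l r : RTree} (h : (seq (node k l r)).Nodup) :
    (seq l).Nodup := by
  simp only [seq] at h
  exact (List.nodup_append.1 h).1

lemma nodup_right {k : ℕ} {l r : RTree} (h : (seq (node k l r)).Nodup) :
    (seq r).Nodup := by
  simp only [seq] at h
  exact ((List.nodup_append.1 h).2.1).of_cons

end RTree
namespace RTree

/-- A right comb: branch/leaf pairs followed by a final leaf. -/
def comb : List (ℕ × ℕ) → ℕ → RTree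
  | [], y => leaf y
  | (b, x) :: p, y => node b (leaf x) (comb p y)

@[simp] lemma comb_nil (y : ℕ) : comb [] y = leaf y := rfl
@[simp] lemma comb_cons (b x : ℕ) (p : List (ℕ × ℕ)) (y : ℕ) :
    comb ((b, x) :: p) y = node b (leaf x) (comb p y) := rfl

@[simp] lemma comb_branchSeq (p : List (ℕ × ℕ)) (y : ℕ) :
    branchSeq (comb p y) = p.map Prod.fst := by
  induction p with
  | nil => simp [branchSeq]
  | cons hd tl ih => obtain ⟨b, x⟩ := hd; simp [branchSeq, ih]

@[simp] lemma comb_leafSeq (p : List (ℕ × ℕ)) (y : ℕ) :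
    leafSeq (comb p y) = p.map Prod.snd ++ [y] := by
  induction p with
  | nil => simp [leafSeq]
  | cons hd tl ih => obtain ⟨b, x⟩ := hd; simp [leafSeq, ih]

lemma mem_seq_comb {m : ℕ} {p : List (ℕ × ℕ)} {y : ℕ} (h : m ∈ seq (comb p y)) :
    m ∈ p.map Prod.fst ∨ m ∈ p.map Prod.snd ∨ m = y := by
  have := ((seq_perm_branch_leaf (comb p y)).mem_iff).1 h
  rw [comb_branchSeq, comb_leafSeq] at this
  rcases List.mem_append.1 this with h1 | h1
  · exact Or.inl h1
  · rcases List.mem_append.1 h1 with h2 | h2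
    · exact Or.inr (Or.inl h2)
    · exact Or.inr (Or.inr (by simpa using h2))

def reattach : ℕ → List (ℕ × ℕ) → ℕ → List (ℕ × ℕ)
  | c, [], y => [(c, y)]
  | c, (b, x) :: p, y => (c, x) :: reattach b p y

@[simp] lemma reattach_fst : ∀ (c : ℕ) (p : List (ℕ × ℕ)) (y : ℕ),
    (reattach c p y).map Prod.fst = c :: p.map Prod.fst := by
  intro c p
  induction p generalizing c with
  | nil => intro y; simp [reattach]
  | cons hd tl ih => intro y; obtain ⟨b, x⟩ := hd; simp [reattach, ih]

/-- Absorb a single leaf on the right into a comb. -/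
lemma absorbR : ∀ (p : List (ℕ × ℕ)) (c y z : ℕ),
    LevelValid (node c (comb p y) (leaf z)) →
    (∀ b ∈ c :: p.map Prod.fst, b < z) →
    Reach (node c (comb p y) (leaf z)) (comb (reattach c p y) z) := by
  intro p
  induction p with
  | nil => intro c y z _ _; exact Reach.refl
  | cons hd tl ih =>
    obtain ⟨b, x⟩ := hd
    intro c y z hv hlt
    obtain ⟨hL, hR, hvL, hvR⟩ := hv
    obtain ⟨hL', hR', hvL', hvR'⟩ := hvL
    -- node c (node b (leaf x) (comb tl y)) (leaf z) → node c (leaf x) (node b (comb tl y) (leaf z))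
    have hbz : b < z := hlt b (by simp)
    have hv2 : LevelValid (node b (comb tl y) (leaf z)) := by
      refine ⟨hR', ?_, hvR', trivial⟩
      intro m hm; simp [seq] at hm; omega
    have step1 : Step (node c (comb ((b, x) :: tl) y) (leaf z))
        (node c (leaf x) (node b (comb tl y) (leaf z))) := by
      refine ⟨RMove.assoc c b (leaf x) (comb tl y) (leaf z), ⟨hL, hR, ⟨hL', hR', hvL', hvR'⟩, trivial⟩, ?_⟩
      refine ⟨?_, ?_, trivial, hv2⟩
      · intro m hm; exact hL m (by simp [seq] at hm ⊢; tauto)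
      · intro m hm
        simp [seq] at hm
        rcases hm with h | h | h
        · exact hL m (by simp [seq]; tauto)
        · exact hL m (by simp [seq]; tauto)
        · exact hR m (by simp [seq]; tauto)
    refine Reach.trans step1.reach ?_
    have := ih b y z hv2 (by
      intro m hm
      rcases List.mem_cons.1 hm with h | h
      · subst h; exact hbz
      · exact hlt m (by rw [List.map_cons]; exact List.mem_cons_of_mem _ (List.mem_cons_of_mem _ h)))
    have hlift := Reach.congrR c (leaf x) step1.2.2 this
    simpa [reattach] using hlift

end RTree
namespace RTree

lemma mergeAux : ∀ (q p : List (ℕ × ℕ)) (k y z : ℕ),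
    LevelValid (node k (comb p y) (comb q z)) →
    Reduced (node k (comb p y) (comb q z)) →
    (seq (node k (comb p y) (comb q z))).Nodup →
    (p.map Prod.fst).Pairwise (· < ·) →
    (q.map Prod.fst).Pairwise (· < ·) →
    ∃ r w, ((r.map Prod.fst).Pairwise (· < ·)) ∧
      Reach (node k (comb p y) (comb q z)) (comb r w) := by
  intro q
  induction q with
  | nil =>
    intro p k y z hv hred hnd hps hqs
    refine ⟨reattach k p y, z, ?_, absorbR p k y z hv ?_⟩
    · rw [reattach_fst]
      refine List.pairwise_cons.2 ⟨?_, hps⟩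
      intro b hb
      exact hv.1 b (branch_mem_seq _ b (by rw [comb_branchSeq]; exact hb))
    · intro b hb
      rcases List.mem_cons.1 hb with h | h
      · subst h; exact hv.2.1 z (by simp [seq])
      · refine hred b ?_ z (by simp [leafSeq])
        simp only [branchSeq, comb_branchSeq, List.mem_append, List.mem_cons,
          List.mem_nil_iff, or_false] at h ⊢
        tauto
  | cons cu q' ihq =>
    intro p
    induction p with
    | nil =>
      intro k y z hv hred hnd hps hqs
      obtain ⟨c, u⟩ := cu
      refine ⟨(k, y) :: (c, u) :: q', z, ?_, Reach.refl⟩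
      simp only [List.map_cons]
      refine List.pairwise_cons.2 ⟨?_, by simpa using hqs⟩
      intro b hb
      refine hv.2.1 b (branch_mem_seq _ b ?_)
      rw [comb_branchSeq]; simpa using hb
    | cons ax p' ihp =>
      intro k y z hv hred hnd hps hqs
      obtain ⟨a, x⟩ := ax
      obtain ⟨c, u⟩ := cu
      simp only [List.map_cons] at hps hqs
      obtain ⟨hL, hR, hvL, hvR⟩ := hv
      obtain ⟨hLx, hLP, -, hvP'⟩ := hvL
      obtain ⟨hRu, hRQ, -, hvQ'⟩ := hvR
      have hvorig : LevelValid (node k (comb ((a, x) :: p') y) (comb ((c, u) :: q') z)) :=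
        ⟨hL, hR, ⟨hLx, hLP, trivial, hvP'⟩, ⟨hRu, hRQ, trivial, hvQ'⟩⟩
      have hkx : k < x := hL x (by simp [seq])
      have hka : k < a := hL a (by simp [seq])
      have hkP' : ∀ m ∈ seq (comb p' y), k < m := fun m hm => hL m (by
        simp only [comb_cons, seq, List.mem_append, List.mem_cons, List.mem_singleton]
        tauto)
      have hkc : k < c := hR c (by simp [seq])
      have hku : k < u := hR u (by simp [seq])
      have hkQ' : ∀ m ∈ seq (comb q' z), k < m := fun m hm => hR m (by
        simp only [comb_cons, seq, List.mem_append, List.mem_cons, List.mem_singleton]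
        tauto)
      -- a ≠ c from nodup
      have hac : a ≠ c := by
        intro h
        subst h
        simp only [seq] at hnd
        have hdisj := (List.nodup_append.1 hnd).2.2
        exact hdisj a (by simp [seq]) a (by simp [seq]) rfl
      rcases Nat.lt_or_ge a c with hlt | hge
      · -- a < c : rotate the top left branch out
        have hQle : ∀ m ∈ seq (comb ((c, u) :: q') z), c ≤ m := by
          intro m hm
          simp only [comb_cons, seq, List.mem_append, List.mem_cons,
            List.mem_singleton, List.mem_nil_iff, or_false] at hm
          rcases hm with h | h | h
          · exact le_of_lt (hRu m (by simp [seq, h]))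
          · omega
          · exact le_of_lt (hRQ m h)
        have hvsub : LevelValid (node a (comb p' y) (comb ((c, u) :: q') z)) :=
          ⟨hLP, fun m hm => lt_of_lt_of_le hlt (hQle m hm), hvP',
            ⟨hRu, hRQ, trivial, hvQ'⟩⟩
        have hvtgt : LevelValid (node k (leaf x)
            (node a (comb p' y) (comb ((c, u) :: q') z))) := by
          refine ⟨fun m hm => by simp [seq] at hm; omega, ?_, trivial, hvsub⟩
          intro m hm
          simp only [seq, comb_cons, List.mem_append, List.mem_cons, List.mem_singleton,
            List.mem_nil_iff, or_false] at hm
          rcases hm with h | h | h | h | h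
          · exact hkP' m h
          · omega
          · omega
          · omega
          · exact hkQ' m h
        have step1 : Step (node k (comb ((a, x) :: p') y) (comb ((c, u) :: q') z))
            (node k (leaf x) (node a (comb p' y) (comb ((c, u) :: q') z))) :=
          ⟨RMove.assoc k a (leaf x) (comb p' y) (comb ((c, u) :: q') z), hvorig, hvtgt⟩
        have hnd2 := (step1.1.seq_perm).nodup hnd
        have hred2 := Reach.reduced step1.reach hred
        obtain ⟨r', w', hr's, hreach'⟩ := ihp a y z hvsub hred2.right (nodup_right hnd2)
          (List.pairwise_cons.1 hps).2 (by simpa using hqs)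
        refine ⟨(k, x) :: r', w', ?_, ?_⟩
        · simp only [List.map_cons]
          refine List.pairwise_cons.2 ⟨?_, hr's⟩
          intro b hb
          have hb2 : b ∈ branchSeq (comb r' w') := by rw [comb_branchSeq]; exact hb
          have hb3 := (hreach'.branch_perm.symm.mem_iff).1 hb2
          exact hvtgt.2.1 b (branch_mem_seq _ b hb3)
        · simp only [comb_cons]
          exact step1.reach.trans (Reach.congrR k (leaf x) hvtgt hreach')
      · -- c < a : absorb the top right pair into the left comb
        have hca : c < a := lt_of_le_of_ne hge (Ne.symm hac)
        have hPle : ∀ m ∈ seq (comb ((a, x) :: p') y), a ≤ m := by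
          intro m hm
          simp only [comb_cons, seq, List.mem_append, List.mem_cons,
            List.mem_singleton, List.mem_nil_iff, or_false] at hm
          rcases hm with h | h | h
          · exact le_of_lt (hLx m (by simp [seq, h]))
          · omega
          · exact le_of_lt (hLP m h)
        have hcu : c < u := by
          refine hred c ?_ u ?_
          · simp only [branchSeq, comb_branchSeq, List.map_cons, List.mem_append,
              List.mem_cons]
            tauto
          · simp only [leafSeq, comb_leafSeq, List.map_cons, List.mem_append,
              List.mem_cons]
            tauto
        have hvinner : LevelValid (node c (comb ((a, x) :: p') y) (leaf u)) :=
          ⟨fun m hm => lt_of_lt_of_le hca (hPle m hm),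
            fun m hm => by simp [seq] at hm; omega,
            ⟨hLx, hLP, trivial, hvP'⟩, trivial⟩
        have hvtgt : LevelValid (node k
            (node c (comb ((a, x) :: p') y) (leaf u)) (comb q' z)) := by
          refine ⟨?_, hkQ', hvinner, hvQ'⟩
          intro m hm
          simp only [seq, comb_cons, List.mem_append, List.mem_cons, List.mem_singleton,
            List.mem_nil_iff, or_false] at hm
          rcases hm with (h | h | h) | h | h
          · omega
          · omega
          · exact hkP' m h
          · omega
          · omega
        have stepA : Step (node k (comb ((a, x) :: p') y) (comb ((c, u) :: q') z))
            (node k (node c (comb ((a, x) :: p') y) (leaf u)) (comb q' z)) :=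
          ⟨RMove.assocInv k c (comb ((a, x) :: p') y) (leaf u) (comb q' z), hvorig, hvtgt⟩
        have habs := absorbR ((a, x) :: p') c y u hvinner (by
          intro b hb
          refine hred b ?_ u ?_
          · rcases List.mem_cons.1 hb with h | h
            · subst h
              simp only [branchSeq, comb_branchSeq, List.map_cons, List.mem_append,
                List.mem_cons]
              tauto
            · simp only [branchSeq, comb_branchSeq, List.map_cons, List.mem_append,
                List.mem_cons, List.mem_nil_iff, or_false] at h ⊢
              tauto
          · simp only [leafSeq, comb_leafSeq, List.map_cons, List.mem_append,
              List.mem_cons]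
            tauto)
        have hlift : Reach (node k (node c (comb ((a, x) :: p') y) (leaf u)) (comb q' z))
            (node k (comb (reattach c ((a, x) :: p') y) u) (comb q' z)) :=
          Reach.congrL k (comb q' z) hvtgt habs
        have chain := stepA.reach.trans hlift
        have hvT := chain.valid hvorig
        have hsorted : ((reattach c ((a, x) :: p') y).map Prod.fst).Pairwise (· < ·) := by
          rw [reattach_fst]
          simp only [List.map_cons]
          refine List.pairwise_cons.2 ⟨?_, hps⟩
          intro b hb
          rcases List.mem_cons.1 hb with h | h
          · omega
          · exact lt_trans hca ((List.pairwise_cons.1 hps).1 b h)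
        obtain ⟨r, w, hrs, hreach⟩ := ihq (reattach c ((a, x) :: p') y) k u z hvT
          (chain.reduced hred) (chain.seq_perm.nodup hnd) hsorted
          (List.pairwise_cons.1 hqs).2
        exact ⟨r, w, hrs, chain.trans hreach⟩

end RTree
namespace RTree

/-- Every valid reduced tree with distinct levels reaches a comb with sorted branches. -/
lemma normAux : ∀ t : RTree, LevelValid t → Reduced t → (seq t).Nodup →
    ∃ r w, ((r.map Prod.fst).Pairwise (· < ·)) ∧ Reach t (comb r w) := by
  intro t
  induction t with
  | leaf k => intro _ _ _; exact ⟨[], k, by simp, Reach.refl⟩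
  | node k l r ihl ihr =>
    intro hv hred hnd
    obtain ⟨hL, hR, hvl, hvr⟩ := hv
    obtain ⟨pl, wl, hpls, hl⟩ := ihl hvl hred.left (nodup_left hnd)
    obtain ⟨pr, wr, hprs, hr⟩ := ihr hvr hred.right (nodup_right hnd)
    have hv0 : LevelValid (node k l r) := ⟨hL, hR, hvl, hvr⟩
    have c1 : Reach (node k l r) (node k (comb pl wl) r) :=
      Reach.congrL k r hv0 hl
    have c2 : Reach (node k (comb pl wl) r) (node k (comb pl wl) (comb pr wr)) :=
      Reach.congrR k (comb pl wl) (c1.valid hv0) hr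
    have chain := c1.trans c2
    obtain ⟨rr, ww, hrs, hreach⟩ := mergeAux pr pl k wl wr
      (chain.valid hv0) (chain.reduced hred) (chain.seq_perm.nodup hnd) hpls hprs
    exact ⟨rr, ww, hrs, chain.trans hreach⟩

/-- Insert the first leaf of a comb into its correct place among the remaining leaves. -/
lemma insertLeaf : ∀ (p : List (ℕ × ℕ)) (b x w : ℕ),
    LevelValid (comb ((b, x) :: p) w) → Reduced (comb ((b, x) :: p) w) →
    ∃ p' w', p'.map Prod.fst = b :: p.map Prod.fst ∧
      p'.map Prod.snd ++ [w'] =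
        List.orderedInsert (· ≤ ·) x (p.map Prod.snd ++ [w]) ∧
      Reach (comb ((b, x) :: p) w) (comb p' w') := by
  intro p
  induction p with
  | nil =>
    intro b x w hv hred
    by_cases hxw : x ≤ w
    · exact ⟨[(b, x)], w, rfl, by simp [List.orderedInsert, hxw], Reach.refl⟩
    · have hbx : b < x := hv.1 x (by simp [seq])
      have hbw : b < w := hv.2.1 w (by simp [seq])
      have step : Step (node b (leaf x) (leaf w)) (node b (leaf w) (leaf x)) :=
        ⟨RMove.swapLeaf b x w,
          ⟨fun m hm => by simp [seq] at hm; omega, fun m hm => by simp [seq] at hm; omega,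
            trivial, trivial⟩,
          ⟨fun m hm => by simp [seq] at hm; omega, fun m hm => by simp [seq] at hm; omega,
            trivial, trivial⟩⟩
      exact ⟨[(b, w)], x, rfl, by simp [List.orderedInsert, hxw], step.reach⟩
  | cons cv p' ih =>
    obtain ⟨c, v⟩ := cv
    intro b x w hv hred
    by_cases hxv : x ≤ v
    · exact ⟨(b, x) :: (c, v) :: p', w, rfl, by simp [List.orderedInsert, hxv], Reach.refl⟩
    · obtain ⟨hL, hR, -, hvr⟩ := hv
      obtain ⟨hcv, hcR, -, hvR⟩ := hvr
      have hbx : b < x := hL x (by simp [seq])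
      have hbc : b < c := hR c (by simp [comb_cons, seq])
      have hbv : b < v := hR v (by simp [comb_cons, seq])
      have hbR : ∀ m ∈ seq (comb p' w), b < m := fun m hm => hR m (by
        simp only [comb_cons, seq, List.mem_append, List.mem_cons, List.mem_singleton,
          List.mem_nil_iff, or_false]
        tauto)
      have hcx : c < x := by
        refine hred c ?_ x ?_
        · simp only [branchSeq, comb_branchSeq, List.map_cons, List.mem_append,
            List.mem_cons, List.mem_nil_iff, or_false]
          tauto
        · simp only [leafSeq, comb_leafSeq, List.map_cons, List.mem_append,
            List.mem_cons, List.mem_nil_iff, or_false]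
          tauto
      have hcv' : c < v := hcv v (by simp [seq])
      have hvorig : LevelValid (comb ((b, x) :: (c, v) :: p') w) :=
        ⟨hL, hR, trivial, ⟨hcv, hcR, trivial, hvR⟩⟩
      have hv1 : LevelValid (node b (node c (leaf x) (leaf v)) (comb p' w)) :=
        ⟨fun m hm => by simp [seq] at hm; omega, hbR,
          ⟨fun m hm => by simp [seq] at hm; omega, fun m hm => by simp [seq] at hm; omega,
            trivial, trivial⟩, hvR⟩
      have hv2 : LevelValid (node b (node c (leaf v) (leaf x)) (comb p' w)) :=
        ⟨fun m hm => by simp [seq] at hm; omega, hbR,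
          ⟨fun m hm => by simp [seq] at hm; omega, fun m hm => by simp [seq] at hm; omega,
            trivial, trivial⟩, hvR⟩
      have hvsub : LevelValid (node c (leaf x) (comb p' w)) :=
        ⟨fun m hm => by simp [seq] at hm; omega, hcR, trivial, hvR⟩
      have hv3 : LevelValid (node b (leaf v) (node c (leaf x) (comb p' w))) := by
        refine ⟨fun m hm => by simp [seq] at hm; omega, ?_, trivial, hvsub⟩
        intro m hm
        simp only [seq, List.mem_append, List.mem_cons, List.mem_singleton,
          List.mem_nil_iff, or_false] at hm
        rcases hm with h | h | h
        · omega
        · omega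
        · exact hbR m h
      have step1 : Step (comb ((b, x) :: (c, v) :: p') w)
          (node b (node c (leaf x) (leaf v)) (comb p' w)) :=
        ⟨RMove.assocInv b c (leaf x) (leaf v) (comb p' w), hvorig, hv1⟩
      have step2 : Step (node b (node c (leaf x) (leaf v)) (comb p' w))
          (node b (node c (leaf v) (leaf x)) (comb p' w)) :=
        ⟨RMove.congrL b (comb p' w) (RMove.swapLeaf c x v), hv1, hv2⟩
      have step3 : Step (node b (node c (leaf v) (leaf x)) (comb p' w))
          (node b (leaf v) (node c (leaf x) (comb p' w))) :=
        ⟨RMove.assoc b c (leaf v) (leaf x) (comb p' w), hv2, hv3⟩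
      have chain0 : Reach (comb ((b, x) :: (c, v) :: p') w)
          (node b (leaf v) (comb ((c, x) :: p') w)) :=
        step1.reach.trans (step2.reach.trans step3.reach)
      have hredsub : Reduced (comb ((c, x) :: p') w) :=
        (Reach.reduced chain0 hred).right
      obtain ⟨p'', w'', hfst, hsnd, hreach⟩ := ih c x w hvsub hredsub
      have hlift : Reach (node b (leaf v) (comb ((c, x) :: p') w))
          (node b (leaf v) (comb p'' w'')) :=
        Reach.congrR b (leaf v) hv3 hreach
      refine ⟨(b, v) :: p'', w'', ?_, ?_, ?_⟩
      · simp [hfst]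
      · simp only [List.map_cons, List.cons_append, hsnd]
        simp [List.orderedInsert, hxv]
      · exact chain0.trans hlift

end RTree
namespace RTree

/-- Sort the leaves of a comb. -/
lemma sortLeaves : ∀ (p : List (ℕ × ℕ)) (w : ℕ),
    LevelValid (comb p w) → Reduced (comb p w) →
    ∃ p' w', p'.map Prod.fst = p.map Prod.fst ∧
      (p'.map Prod.snd ++ [w']).Pairwise (· ≤ ·) ∧
      Reach (comb p w) (comb p' w') := by
  intro p
  induction p with
  | nil => intro w _ _; exact ⟨[], w, rfl, by simp, Reach.refl⟩
  | cons bx p ih =>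
    obtain ⟨b, x⟩ := bx
    intro w hv hred
    obtain ⟨p₂, w₂, hfst2, hsort2, hreach2⟩ := ih w hv.2.2.2
      (by simpa only [comb_cons] using hred.right)
    have hlift : Reach (comb ((b, x) :: p) w) (comb ((b, x) :: p₂) w₂) := by
      simp only [comb_cons]
      exact Reach.congrR b (leaf x) hv hreach2
    have hv2 := hlift.valid hv
    have hred2 := hlift.reduced hred
    obtain ⟨p₃, w₃, hfst3, hsnd3, hreach3⟩ := insertLeaf p₂ b x w₂ hv2 hred2
    refine ⟨p₃, w₃, ?_, ?_, hlift.trans hreach3⟩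
    · simp [hfst3, hfst2]
    · rw [hsnd3]
      exact List.Pairwise.orderedInsert x _ hsort2

/-- Reach preserves `IsRRB`. -/
lemma Reach.isRRB {n : ℕ} {s t : RTree} (h : Reach s t) (hs : IsRRB n s) : IsRRB n t := by
  obtain ⟨⟨hc, hp, hv⟩, hr⟩ := hs
  refine ⟨⟨?_, (h.seq_perm.symm).trans hp, h.valid hv⟩, Reach.reduced h hr⟩
  rw [leafCount_eq_length, ← h.leaf_perm.length_eq, ← leafCount_eq_length]
  exact hc

/-- A reach between RRB trees yields a chain of primitive RRB arrows. -/
lemma Reach.moveRRB {n : ℕ} {s t : RTree} (h : Reach s t) (hs : IsRRB n s) :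
    Relation.ReflTransGen (MoveRRB n) s t := by
  induction h with
  | refl => exact Relation.ReflTransGen.refl
  | @tail b c h1 h2 ih =>
    exact Relation.ReflTransGen.tail ih
      ⟨h2.1, Reach.isRRB h1 hs, Reach.isRRB (Relation.ReflTransGen.tail h1 h2) hs⟩

/-- The branch levels of an RRB tree of length `n` are exactly `0, …, n-2`. -/
lemma branch_perm_range {n : ℕ} {t : RTree} (ht : IsRRB n t) :
    (branchSeq t).Perm (List.range (n - 1)) := by
  obtain ⟨⟨hc, hp, hv⟩, hr⟩ := ht
  have hnd : (seq t).Nodup := (hp.symm).nodup List.nodup_range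
  have hbl : (branchSeq t ++ leafSeq t).Nodup := (seq_perm_branch_leaf t).nodup hnd
  have hndb : (branchSeq t).Nodup := (List.nodup_append.1 hbl).1
  have hndl : (leafSeq t).Nodup := (List.nodup_append.1 hbl).2.1
  have hlen : (seq t).length = 2 * n - 1 := by rw [hp.length_eq, List.length_range]
  have hlen2 : (branchSeq t).length + (leafSeq t).length = 2 * n - 1 := by
    rw [← List.length_append, ← (seq_perm_branch_leaf t).length_eq, hlen]
  have hllen : (leafSeq t).length = n := by rw [← leafCount_eq_length, hc]
  have hn : 1 ≤ n := by
    have := leafCount_pos t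
    omega
  have hblen : (branchSeq t).length = n - 1 := by omega
  have hsub : branchSeq t ⊆ List.range (n - 1) := by
    intro b hb
    rw [List.mem_range]
    -- every leaf level lies strictly between b and 2n-1
    have hlsub : (leafSeq t).toFinset ⊆ Finset.Ico (b + 1) (2 * n - 1) := by
      intro m hm
      rw [List.mem_toFinset] at hm
      rw [Finset.mem_Ico]
      constructor
      · exact hr b hb m hm
      · have : m ∈ List.range (2 * n - 1) :=
          hp.mem_iff.1 (leaf_mem_seq t m hm)
        simpa using this
    have hcard : n ≤ 2 * n - 1 - (b + 1) := by
      have h1 := Finset.card_le_card hlsub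
      rw [List.toFinset_card_of_nodup hndl, hllen, Nat.card_Ico] at h1
      exact h1
    omega
  exact (hndb.subperm hsub).perm_of_length_le (by simp [hblen])

lemma pair_list_ext : ∀ (r r' : List (ℕ × ℕ)),
    r.map Prod.fst = r'.map Prod.fst → r.map Prod.snd = r'.map Prod.snd → r = r' := by
  intro r
  induction r with
  | nil => intro r' h1 _; cases r' <;> simp_all
  | cons a r ih =>
    intro r' h1 h2
    cases r' with
    | nil => simp at h1
    | cons b r' =>
      simp only [List.map_cons, List.cons_inj_right, List.cons.injEq] at h1 h2 ⊢
      exact ⟨Prod.ext h1.1 h2.1, ih r' h1.2 h2.2⟩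

end RTree
/-- Any two reduced resolved binary trees of length `n` are connected by a
finite sequence of primitive arrows: the groupoid `RRBTree_n` is connected. -/
theorem rrb_connected (n : ℕ) (s t : RTree)
    (hs : RTree.IsRRB n s) (ht : RTree.IsRRB n t) :
    Relation.ReflTransGen (RTree.MoveRRB n) s t := by
  classical
  open RTree in
  have hnds : (seq s).Nodup := (hs.1.2.1.symm).nodup List.nodup_range
  have hndt : (seq t).Nodup := (ht.1.2.1.symm).nodup List.nodup_range
  obtain ⟨ps, ws, hsps, hRs1⟩ := normAux s hs.1.2.2 hs.2 hnds
  obtain ⟨ps', ws', hfst_s, hsort_s, hRs2⟩ :=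
    sortLeaves ps ws (hRs1.valid hs.1.2.2) (hRs1.reduced hs.2)
  have Rs : Reach s (comb ps' ws') := hRs1.trans hRs2
  obtain ⟨pt, wt, hspt, hRt1⟩ := normAux t ht.1.2.2 ht.2 hndt
  obtain ⟨pt', wt', hfst_t, hsort_t, hRt2⟩ :=
    sortLeaves pt wt (hRt1.valid ht.1.2.2) (hRt1.reduced ht.2)
  have Rt : Reach t (comb pt' wt') := hRt1.trans hRt2
  -- branch sequences agree up to permutation
  have hbs : (branchSeq s).Perm (ps'.map Prod.fst) := by
    have := Rs.branch_perm; rwa [comb_branchSeq] at this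
  have hbt : (branchSeq t).Perm (pt'.map Prod.fst) := by
    have := Rt.branch_perm; rwa [comb_branchSeq] at this
  have hb_st : (branchSeq s).Perm (branchSeq t) :=
    (branch_perm_range hs).trans (branch_perm_range ht).symm
  have hperm_branch : (ps'.map Prod.fst).Perm (pt'.map Prod.fst) :=
    hbs.symm.trans (hb_st.trans hbt)
  have hsorted_s : (ps'.map Prod.fst).Pairwise (· ≤ ·) := by
    rw [hfst_s]; exact hsps.imp le_of_lt
  have hsorted_t : (pt'.map Prod.fst).Pairwise (· ≤ ·) := by
    rw [hfst_t]; exact hspt.imp le_of_lt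
  have hfsteq : ps'.map Prod.fst = pt'.map Prod.fst :=
    List.Perm.eq_of_pairwise' hsorted_s hsorted_t hperm_branch
  -- leaf sequences agree up to permutation
  have hls : (leafSeq s).Perm (ps'.map Prod.snd ++ [ws']) := by
    have := Rs.leaf_perm; rwa [comb_leafSeq] at this
  have hlt : (leafSeq t).Perm (pt'.map Prod.snd ++ [wt']) := by
    have := Rt.leaf_perm; rwa [comb_leafSeq] at this
  have hseq_st : (seq s).Perm (seq t) := hs.1.2.1.trans ht.1.2.1.symm
  have h1 : (branchSeq s ++ leafSeq s).Perm (branchSeq s ++ leafSeq t) :=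
    (seq_perm_branch_leaf s).symm.trans (hseq_st.trans
      ((seq_perm_branch_leaf t).trans ((hb_st.symm).append_right _)))
  have hl_st : (leafSeq s).Perm (leafSeq t) := (List.perm_append_left_iff _).1 h1
  have hleafperm : (ps'.map Prod.snd ++ [ws']).Perm (pt'.map Prod.snd ++ [wt']) :=
    hls.symm.trans (hl_st.trans hlt)
  have hleafeq := List.Perm.eq_of_pairwise' hsort_s hsort_t hleafperm
  have hlen : (ps'.map Prod.snd).length = (pt'.map Prod.snd).length := by
    have := congrArg List.length hfsteq
    simpa using this
  obtain ⟨hsnd_eq, hw_eq⟩ := List.append_inj hleafeq hlen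
  have hw : ws' = wt' := by simpa using hw_eq
  have hpeq : ps' = pt' := pair_list_ext _ _ hfsteq hsnd_eq
  have hreach : Reach s t := Rs.trans (by rw [hpeq, hw]; exact Rt.symm)
  exact hreach.moveRRB hs
end

section
/- For any two internally resolved binary trees with nodules of the same length n, there is a finite sequence of primitive arrows (branch interchanges, reattachments, prunings, and graftings of nodules) transforming one into the other. -/
/-- A planar binary tree whose internal nodes carry levels and whose leaves may
carry a nodule (marking the identity object `e`). -/
inductive NTree : Type
  | leaf (nodule : Bool) : NTree
  | node (lvl : ℕ) (l r : NTree) : NTree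

namespace NTree

/-- Left-to-right sequence of internal node levels. -/
def seq : NTree → List ℕ
  | leaf _ => []
  | node k l r => seq l ++ k :: seq r

/-- Number of nodules (marked leaves). -/
def nodules : NTree → ℕ
  | leaf b => if b then 1 else 0
  | node _ l r => nodules l + nodules r

/-- The length: the number of unmarked (nodule-free) leaves. -/
def len : NTree → ℕ
  | leaf b => if b then 0 else 1
  | node _ l r => len l + len r

/-- Every internal node lies strictly below all internal nodes of its subtrees. -/
def LevelValid : NTree → Prop
  | leaf _ => True
  | node k l r => (∀ m ∈ seq l, k < m) ∧ (∀ m ∈ seq r, k < m) ∧ LevelValid l ∧ LevelValid r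

/-- An internally resolved binary tree with nodules of height `n`: the `n`
internal nodes carry the distinct levels `0, …, n-1`, parents below children
(all `n+1` leaves, marked or not, sit at level `n`). -/
def IsIRBN (n : ℕ) (t : NTree) : Prop :=
  (seq t).Perm (List.range n) ∧ LevelValid t

/-- The inherited `IRBTree` moves: edge reattachment and interchange of the
levels of sibling branches, applied anywhere in the tree. -/
inductive LMove : NTree → NTree → Prop
  | assoc (k l : ℕ) (A B C : NTree) :
      LMove (node k (node l A B) C) (node k A (node l B C))
  | assocInv (k l : ℕ) (A B C : NTree) :
      LMove (node k A (node l B C)) (node k (node l A B) C)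
  | interchange (k a b : ℕ) (A B C D : NTree) :
      LMove (node k (node a A B) (node b C D)) (node k (node b A B) (node a C D))
  | congrL (k : ℕ) {l l' : NTree} (r : NTree) : LMove l l' → LMove (node k l r) (node k l' r)
  | congrR (k : ℕ) (l : NTree) {r r' : NTree} : LMove r r' → LMove (node k l r) (node k l r')

/-- Decrement a level if it lies above `k`. -/
def decL (k j : ℕ) : ℕ := if k < j then j - 1 else j

/-- Decrement all levels above `k` throughout a tree. -/
def decAbove (k : ℕ) : NTree → NTree
  | leaf b => leaf b
  | node j l r => node (decL k j) (decAbove k l) (decAbove k r)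

/-- Pruning of a nodule at the pivot level `k`: delete a nodule leaf together
with its parent branch at level `k`, and lower all levels above `k` by one. -/
inductive PruneAt : ℕ → NTree → NTree → Prop
  | left (k : ℕ) (s : NTree) : PruneAt k (node k (leaf true) s) (decAbove k s)
  | right (k : ℕ) (s : NTree) : PruneAt k (node k s (leaf true)) (decAbove k s)
  | congrL (k j : ℕ) {l l' : NTree} (r : NTree) :
      PruneAt k l l' → PruneAt k (node j l r) (node (decL k j) l' (decAbove k r))
  | congrR (k j : ℕ) (l : NTree) {r r' : NTree} :
      PruneAt k r r' → PruneAt k (node j l r) (node (decL k j) (decAbove k l) r')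

/-- Primitive moves on IRB trees with nodules: the inherited `IRBTree` moves,
pruning of a nodule, and grafting of a nodule (the inverse of pruning). -/
def NMove (s t : NTree) : Prop :=
  LMove s t ∨ (∃ k, PruneAt k s t) ∨ (∃ k, PruneAt k t s)

/-- A tree is a valid IRB tree with nodules (of some height). -/
def ValidN (t : NTree) : Prop := ∃ n, IsIRBN n t

/-- A primitive arrow of the groupoid `IRNBTree`: a primitive move between
valid IRB trees with nodules. -/
def NMoveValid (s t : NTree) : Prop := NMove s t ∧ ValidN s ∧ ValidN t

end NTree

namespace NTree

lemma seq_length : ∀ t : NTree, (seq t).length + 1 = len t + nodules t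
  | leaf b => by cases b <;> simp [seq, len, nodules]
  | node k l r => by
    have hl := seq_length l; have hr := seq_length r
    simp only [seq, len, nodules, List.length_append, List.length_cons]
    omega

lemma decL_lt_decL {k a b : ℕ} (ha : a ≠ k) (h : a < b) : decL k a < decL k b := by
  unfold decL; split <;> split <;> omega

lemma seq_decAbove (k : ℕ) : ∀ t, seq (decAbove k t) = (seq t).map (decL k)
  | leaf _ => rfl
  | node j l r => by simp [decAbove, seq, seq_decAbove k l, seq_decAbove k r]

lemma len_decAbove (k : ℕ) : ∀ t, len (decAbove k t) = len t
  | leaf _ => rfl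
  | node j l r => by simp [decAbove, len, len_decAbove k l, len_decAbove k r]

lemma levelValid_decAbove (k : ℕ) : ∀ t, LevelValid t → k ∉ seq t → LevelValid (decAbove k t)
  | leaf _, _, _ => trivial
  | node j l r, h, hk => by
    obtain ⟨h1, h2, h3, h4⟩ := h
    simp only [seq, List.mem_append, List.mem_cons] at hk
    push_neg at hk
    refine ⟨?_, ?_, levelValid_decAbove k l h3 hk.1, levelValid_decAbove k r h4 hk.2.2⟩
    · intro m hm
      rw [seq_decAbove] at hm
      obtain ⟨m₀, hm₀, rfl⟩ := List.mem_map.mp hm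
      exact decL_lt_decL (Ne.symm hk.2.1) (h1 m₀ hm₀)
    · intro m hm
      rw [seq_decAbove] at hm
      obtain ⟨m₀, hm₀, rfl⟩ := List.mem_map.mp hm
      exact decL_lt_decL (Ne.symm hk.2.1) (h2 m₀ hm₀)

lemma prune_seq {k : ℕ} {t t' : NTree} (h : PruneAt k t t') :
    ∃ A B, seq t = A ++ k :: B ∧ seq t' = (A ++ B).map (decL k) := by
  induction h with
  | left s => exact ⟨[], seq s, by simp [seq], by simp [seq_decAbove]⟩
  | right s => exact ⟨seq s, [], by simp [seq], by simp [seq_decAbove]⟩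
  | congrL j r _ ih =>
    obtain ⟨A, B, h1, h2⟩ := ih
    exact ⟨A, B ++ j :: seq r, by simp [seq, h1], by simp [seq, h2, seq_decAbove]⟩
  | congrR j l _ ih =>
    obtain ⟨A, B, h1, h2⟩ := ih
    exact ⟨seq l ++ j :: A, B, by simp [seq, h1], by simp [seq, h2, seq_decAbove]⟩

lemma prune_len {k : ℕ} {t t' : NTree} (h : PruneAt k t t') : len t' = len t := by
  induction h with
  | left s => simp [len, len_decAbove]
  | right s => simp [len, len_decAbove]
  | congrL j r _ ih => simp [len, len_decAbove, ih]
  | congrR j l _ ih => simp [len, len_decAbove, ih]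

lemma prune_levelValid {k : ℕ} {t t' : NTree} (h : PruneAt k t t')
    (hv : LevelValid t) (hn : (seq t).Nodup) : LevelValid t' := by
  induction h with
  | left s =>
    refine levelValid_decAbove k s hv.2.2.2 ?_
    simp only [seq, List.nil_append, List.nodup_cons] at hn
    exact hn.1
  | right s =>
    refine levelValid_decAbove k s hv.2.2.1 ?_
    intro hks
    have hn' : (seq s ++ [k]).Nodup := by simpa [seq] using hn
    exact (List.nodup_append'.mp hn').2.2 hks (by simp)
  | congrL j r hp ih =>
    rename_i l l'
    obtain ⟨h1, h2, h3, h4⟩ := hv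
    simp only [seq, List.nodup_append', List.nodup_cons, List.disjoint_cons_right] at hn
    obtain ⟨hnl, ⟨hjr, hnr⟩, hjl, hdis⟩ := hn
    obtain ⟨A, B, e1, e2⟩ := prune_seq hp
    have hkl : k ∈ seq l := by rw [e1]; simp
    have hjk : j ≠ k := fun h => hjl (h ▸ hkl)
    refine ⟨?_, ?_, ih h3 hnl, levelValid_decAbove k r h4 (fun h => hdis hkl h)⟩
    · intro m hm
      rw [e2] at hm
      obtain ⟨m₀, hm₀, rfl⟩ := List.mem_map.mp hm
      have : m₀ ∈ seq l := by
        rw [e1]; rcases List.mem_append.mp hm₀ with h | h <;> simp [h]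
      exact decL_lt_decL hjk (h1 m₀ this)
    · intro m hm
      rw [seq_decAbove] at hm
      obtain ⟨m₀, hm₀, rfl⟩ := List.mem_map.mp hm
      exact decL_lt_decL hjk (h2 m₀ hm₀)
  | congrR j l hp ih =>
    rename_i r r'
    obtain ⟨h1, h2, h3, h4⟩ := hv
    simp only [seq, List.nodup_append', List.nodup_cons, List.disjoint_cons_right] at hn
    obtain ⟨hnl, ⟨hjr, hnr⟩, hjl, hdis⟩ := hn
    obtain ⟨A, B, e1, e2⟩ := prune_seq hp
    have hkr : k ∈ seq r := by rw [e1]; simp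
    have hjk : j ≠ k := fun h => hjr (h ▸ hkr)
    refine ⟨?_, ?_, levelValid_decAbove k l h3 (fun h => hdis h hkr), ih h4 hnr⟩
    · intro m hm
      rw [seq_decAbove] at hm
      obtain ⟨m₀, hm₀, rfl⟩ := List.mem_map.mp hm
      exact decL_lt_decL hjk (h1 m₀ hm₀)
    · intro m hm
      rw [e2] at hm
      obtain ⟨m₀, hm₀, rfl⟩ := List.mem_map.mp hm
      have : m₀ ∈ seq r := by
        rw [e1]; rcases List.mem_append.mp hm₀ with h | h <;> simp [h]
      exact decL_lt_decL hjk (h2 m₀ this)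

end NTree

namespace NTree

lemma perm_map_decL {n k : ℕ} (hk : k < n) :
    (((List.range n).erase k).map (decL k)).Perm (List.range (n - 1)) := by
  have hnd : ((List.range n).erase k).Nodup := (List.nodup_range (n := n)).erase k
  have hmem : ∀ a ∈ (List.range n).erase k, a ≠ k ∧ a < n := by
    intro a ha
    have := ((List.nodup_range (n := n)).mem_erase_iff).mp ha
    exact ⟨this.1, List.mem_range.mp this.2⟩
  refine (List.perm_ext_iff_of_nodup ?_ (List.nodup_range (n := n-1))).mpr ?_
  · refine List.Nodup.map_on ?_ hnd
    intro a ha b hb hab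
    have ha' := hmem a ha; have hb' := hmem b hb
    unfold decL at hab; split at hab <;> split at hab <;> omega
  · intro x
    simp only [List.mem_map, List.mem_range]
    constructor
    · rintro ⟨a, ha, rfl⟩
      have := hmem a ha
      unfold decL; split <;> omega
    · intro hx
      by_cases hxk : x < k
      · refine ⟨x, ?_, by unfold decL; split <;> omega⟩
        exact ((List.nodup_range (n := n)).mem_erase_iff).mpr ⟨by omega, List.mem_range.mpr (by omega)⟩
      · refine ⟨x + 1, ?_, by unfold decL; split <;> omega⟩
        exact ((List.nodup_range (n := n)).mem_erase_iff).mpr ⟨by omega, List.mem_range.mpr (by omega)⟩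

lemma prune_valid {k n : ℕ} {t t' : NTree} (h : PruneAt k t t') (hv : IsIRBN n t) :
    IsIRBN (n - 1) t' := by
  obtain ⟨A, B, e1, e2⟩ := prune_seq h
  have hnd : (seq t).Nodup := hv.1.nodup_iff.mpr (List.nodup_range (n := n))
  have hkn : k < n := by
    have : k ∈ List.range n := hv.1.subset (by rw [e1]; simp)
    exact List.mem_range.mp this
  constructor
  · have p1 : (A ++ B).Perm ((List.range n).erase k) := by
      have : (k :: (A ++ B)).Perm (k :: (List.range n).erase k) :=
        ((List.perm_middle).symm.trans (e1 ▸ hv.1)).trans (List.perm_cons_erase (by simp [hkn]))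
      exact this.cons_inv
    rw [e2]
    exact (p1.map (decL k)).trans (perm_map_decL hkn)
  · exact prune_levelValid h hv.2 hnd

lemma prune_exists : ∀ (t : NTree), nodules t ≠ 0 → (∀ b, t ≠ leaf b) →
    ∃ k t', PruneAt k t t' := by
  intro t
  induction t with
  | leaf b => intro _ hne; exact absurd rfl (hne b)
  | node j l r ihl ihr =>
    intro h _
    by_cases hl : nodules l = 0
    · have hr : nodules r ≠ 0 := by simp only [nodules] at h; omega
      cases r with
      | leaf b =>
        cases b with
        | false => simp [nodules] at hr
        | true => exact ⟨j, _, PruneAt.right j l⟩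
      | node j' l' r' =>
        obtain ⟨k, t', hp⟩ := ihr hr (fun _ => nofun)
        exact ⟨k, _, PruneAt.congrR k j l hp⟩
    · cases l with
      | leaf b =>
        cases b with
        | false => simp [nodules] at hl
        | true => exact ⟨j, _, PruneAt.left j r⟩
      | node j' l' r' =>
        obtain ⟨k, t', hp⟩ := ihl hl (fun _ => nofun)
        exact ⟨k, _, PruneAt.congrL k j r hp⟩

lemma pruneAll : ∀ (N : ℕ) (t : NTree), (seq t).length ≤ N → ValidN t →
    ∃ u, Relation.ReflTransGen NMoveValid t u ∧ ValidN u ∧ len u = len t ∧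
      (nodules u = 0 ∨ u = leaf true) := by
  intro N
  induction N with
  | zero =>
    intro t hlen hv
    refine ⟨t, .refl, hv, rfl, ?_⟩
    cases t with
    | leaf b => cases b with
      | true => exact Or.inr rfl
      | false => exact Or.inl (by simp [nodules])
    | node j l r => simp [seq] at hlen
  | succ N ih =>
    intro t hlen hv
    by_cases h0 : nodules t = 0
    · exact ⟨t, .refl, hv, rfl, Or.inl h0⟩
    cases t with
    | leaf b =>
      cases b with
      | true => exact ⟨leaf true, .refl, hv, rfl, Or.inr rfl⟩
      | false => simp [nodules] at h0
    | node j l r =>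
      obtain ⟨k, t', hp⟩ := prune_exists _ h0 (fun _ => nofun)
      obtain ⟨n, hn⟩ := hv
      have hv' : ValidN t' := ⟨n - 1, prune_valid hp hn⟩
      obtain ⟨A, B, e1, e2⟩ := prune_seq hp
      have hlen' : (seq t').length ≤ N := by
        rw [e2]
        have := congrArg List.length e1
        simp only [List.length_append, List.length_cons] at this ⊢
        simp only [List.length_map, List.length_append]
        omega
      obtain ⟨u, pu, h1, h2, h3⟩ := ih t' hlen' hv'
      refine ⟨u, Relation.ReflTransGen.head ⟨Or.inr (Or.inl ⟨k, hp⟩), ⟨n, hn⟩, hv'⟩ pu,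
        h1, ?_, h3⟩
      rw [h2, prune_len hp]

end NTree

namespace NTree

/-- A primitive `LMove` between level-valid trees. -/
def MV (s t : NTree) : Prop := LMove s t ∧ LevelValid s ∧ LevelValid t

lemma perm_swap_mid (x y : ℕ) (B C : List ℕ) :
    (x :: (B ++ y :: C)).Perm (y :: (B ++ x :: C)) := by
  have h1 : (x :: (B ++ y :: C)).Perm (x :: y :: (B ++ C)) := (List.perm_middle).cons x
  have h2 : (y :: (B ++ x :: C)).Perm (y :: x :: (B ++ C)) := (List.perm_middle).cons y
  exact h1.trans ((List.Perm.swap y x _).trans h2.symm)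

lemma lmove_seq_perm {s t : NTree} (h : LMove s t) : (seq s).Perm (seq t) := by
  induction h with
  | assoc k l A B C =>
    simp only [seq, List.append_assoc]
    exact List.Perm.append_left _ (perm_swap_mid l k (seq B) (seq C))
  | assocInv k l A B C =>
    simp only [seq, List.append_assoc]
    exact List.Perm.append_left _ (perm_swap_mid k l (seq B) (seq C))
  | interchange k a b A B C D =>
    simp only [seq, List.append_assoc]
    refine List.Perm.append_left _ ?_
    simpa [List.append_assoc] using perm_swap_mid a b (seq B ++ k :: seq C) (seq D)
  | congrL k r _ ih => simpa [seq] using ih.append_right (k :: seq r)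
  | congrR k l _ ih => simpa [seq] using (ih.cons k).append_left (seq l)

lemma lmove_symm {s t : NTree} (h : LMove s t) : LMove t s := by
  induction h with
  | assoc k l A B C => exact .assocInv k l A B C
  | assocInv k l A B C => exact .assoc k l A B C
  | interchange k a b A B C D => exact .interchange k b a A B C D
  | congrL k r _ ih => exact .congrL k r ih
  | congrR k l _ ih => exact .congrR k l ih

lemma nmove_symm {s t : NTree} (h : NMove s t) : NMove t s := by
  rcases h with h | h | h
  · exact Or.inl (lmove_symm h)
  · exact Or.inr (Or.inr h)
  · exact Or.inr (Or.inl h)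

lemma nmv_symmetric : Symmetric NMoveValid := fun _ _ h =>
  ⟨nmove_symm h.1, h.2.2, h.2.1⟩

lemma mv_path_perm {a b : NTree} (h : Relation.ReflTransGen MV a b) :
    (seq a).Perm (seq b) := by
  induction h with
  | refl => exact List.Perm.refl _
  | tail _ hstep ih => exact ih.trans (lmove_seq_perm hstep.1)

lemma mv_to_nmv {a b : NTree} (h : Relation.ReflTransGen MV a b) (hv : ValidN a) :
    Relation.ReflTransGen NMoveValid a b ∧ ValidN b := by
  induction h with
  | refl => exact ⟨.refl, hv⟩
  | tail _ hstep ih =>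
    obtain ⟨p, hc⟩ := ih
    obtain ⟨n, hperm, _⟩ := id hc
    have hb : ValidN _ := ⟨n, (lmove_seq_perm hstep.1).symm.trans hperm, hstep.2.2⟩
    exact ⟨p.tail ⟨Or.inl hstep.1, hc, hb⟩, hb⟩

lemma liftR (k : ℕ) (l : NTree) (hl : LevelValid l) (hkl : ∀ m ∈ seq l, k < m) :
    ∀ {r r' : NTree}, Relation.ReflTransGen MV r r' → (∀ m ∈ seq r, k < m) →
      Relation.ReflTransGen MV (node k l r) (node k l r') := by
  intro r r' h hkr
  induction h with
  | refl => exact .refl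
  | tail hpath hstep ih =>
    rename_i c d
    have hkc : ∀ m ∈ seq c, k < m := fun m hm => hkr m ((mv_path_perm hpath).mem_iff.mpr hm)
    have hkd : ∀ m ∈ seq d, k < m := fun m hm =>
      hkc m ((lmove_seq_perm hstep.1).mem_iff.mpr hm)
    exact ih.tail ⟨.congrR k l hstep.1, ⟨hkl, hkc, hl, hstep.2.1⟩, ⟨hkl, hkd, hl, hstep.2.2⟩⟩

end NTree

namespace NTree

/-- `Exp M t₀ t` : `t` is obtained from `t₀` by replacing one unmarked leaf by a
"cherry" `node M (leaf false) (leaf false)`. -/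
inductive Exp (M : ℕ) : NTree → NTree → Prop
  | here : Exp M (leaf false) (node M (leaf false) (leaf false))
  | nodeL {l l' : NTree} (j : ℕ) (r : NTree) : Exp M l l' → Exp M (node j l r) (node j l' r)
  | nodeR (j : ℕ) (l : NTree) {r r' : NTree} : Exp M r r' → Exp M (node j l r) (node j l r')

lemma exp_seq {M : ℕ} {t₀ t : NTree} (h : Exp M t₀ t) : (seq t).Perm (M :: seq t₀) := by
  induction h with
  | here => simp [seq]
  | nodeL j r he ih =>
    simpa [seq] using ih.append_right (j :: seq _)
  | nodeR j l he ih =>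
    refine List.Perm.trans ((ih.cons j).append_left (seq l)) ?_
    rename_i r r'
    have := @List.perm_middle ℕ M (seq l ++ [j]) (seq r)
    simpa [seq] using this

lemma exp_nodules {M : ℕ} {t₀ t : NTree} (h : Exp M t₀ t) : nodules t = nodules t₀ := by
  induction h with
  | here => simp [nodules]
  | nodeL j r _ ih => simp [nodules, ih]
  | nodeR j l _ ih => simp [nodules, ih]

lemma exp_lv {M : ℕ} {t₀ t : NTree} (h : Exp M t₀ t) (hv : LevelValid t₀)
    (hM : ∀ j ∈ seq t₀, j < M) : LevelValid t := by
  induction h with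
  | here => exact ⟨nofun, nofun, trivial, trivial⟩
  | nodeL j r he ih =>
    rename_i l l'
    obtain ⟨h1, h2, h3, h4⟩ := hv
    have hjM : j < M := hM j (by simp [seq])
    refine ⟨?_, h2, ih h3 (fun m hm => hM m (by simp [seq, hm])), h4⟩
    intro m hm
    rcases List.mem_cons.mp ((exp_seq he).mem_iff.mp hm) with h | h
    · exact h ▸ hjM
    · exact h1 m h
  | nodeR j l he ih =>
    rename_i r r'
    obtain ⟨h1, h2, h3, h4⟩ := hv
    have hjM : j < M := hM j (by simp [seq])
    refine ⟨h1, ?_, h3, ih h4 (fun m hm => hM m (by simp [seq, hm]))⟩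
    intro m hm
    rcases List.mem_cons.mp ((exp_seq he).mem_iff.mp hm) with h | h
    · exact h ▸ hjM
    · exact h2 m h

lemma exp_lv_inv {M : ℕ} {t₀ t : NTree} (h : Exp M t₀ t) (hv : LevelValid t) :
    LevelValid t₀ := by
  induction h with
  | here => trivial
  | nodeL j r he ih =>
    obtain ⟨h1, h2, h3, h4⟩ := hv
    exact ⟨fun m hm => h1 m ((exp_seq he).mem_iff.mpr (by simp [hm])), h2, ih h3, h4⟩
  | nodeR j l he ih =>
    obtain ⟨h1, h2, h3, h4⟩ := hv
    exact ⟨h1, fun m hm => h2 m ((exp_seq he).mem_iff.mpr (by simp [hm])), h3, ih h4⟩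

lemma eq_leaf_false {t : NTree} (h : seq t = []) (h0 : nodules t = 0) : t = leaf false := by
  cases t with
  | leaf b => cases b with
    | true => simp [nodules] at h0
    | false => rfl
  | node j l r => simp [seq] at h

lemma collapse_exists {M : ℕ} : ∀ (t : NTree), LevelValid t → nodules t = 0 → M ∈ seq t →
    (∀ j ∈ seq t, j ≤ M) → ∃ t₀, Exp M t₀ t := by
  intro t
  induction t with
  | leaf b => intro _ _ hM _; simp [seq] at hM
  | node j l r ihl ihr =>
    intro hv h0 hM hle
    have h0l : nodules l = 0 := by simp [nodules] at h0; omega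
    have h0r : nodules r = 0 := by simp [nodules] at h0; omega
    by_cases hj : j = M
    · subst hj
      have hl : seq l = [] := by
        cases hsl : seq l with
        | nil => rfl
        | cons a L =>
          have := hv.1 a (by simp [hsl])
          have := hle a (by simp [seq, hsl])
          omega
      have hr : seq r = [] := by
        cases hsr : seq r with
        | nil => rfl
        | cons a L =>
          have := hv.2.1 a (by simp [hsr])
          have := hle a (by simp [seq, hsr])
          omega
      rw [eq_leaf_false hl h0l, eq_leaf_false hr h0r]
      exact ⟨leaf false, .here⟩
    · rcases List.mem_append.mp (by simpa [seq] using hM : M ∈ seq l ++ j :: seq r) with h | h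
      · obtain ⟨l₀, he⟩ := ihl hv.2.2.1 h0l h (fun m hm => hle m (by simp [seq, hm]))
        exact ⟨node j l₀ r, .nodeL j r he⟩
      · rcases List.mem_cons.mp h with h' | h'
        · exact absurd h'.symm hj
        · obtain ⟨r₀, he⟩ := ihr hv.2.2.2 h0r h' (fun m hm => hle m (by simp [seq, hm]))
          exact ⟨node j l r₀, .nodeR j l he⟩

end NTree

namespace NTree

lemma lift_step {M : ℕ} {s₀ t₀ s : NTree} (h : LMove s₀ t₀) (he : Exp M s₀ s) :
    ∃ t, LMove s t ∧ Exp M t₀ t := by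
  induction h generalizing s with
  | assoc k l A B C =>
    cases he with
    | nodeL j r he' =>
      cases he' with
      | nodeL j' r' heA => exact ⟨_, .assoc k l _ B C, .nodeL k _ heA⟩
      | nodeR j' l' heB => exact ⟨_, .assoc k l A _ C, .nodeR k A (.nodeL l C heB)⟩
    | nodeR j l' heC => exact ⟨_, .assoc k l A B _, .nodeR k A (.nodeR l B heC)⟩
  | assocInv k l A B C =>
    cases he with
    | nodeL j r heA => exact ⟨_, .assocInv k l _ B C, .nodeL k C (.nodeL l B heA)⟩
    | nodeR j l' he' =>
      cases he' with
      | nodeL j' r' heB => exact ⟨_, .assocInv k l A _ C, .nodeL k C (.nodeR l A heB)⟩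
      | nodeR j' l'' heC => exact ⟨_, .assocInv k l A B _, .nodeR k _ heC⟩
  | interchange k a b A B C D =>
    cases he with
    | nodeL j r he' =>
      cases he' with
      | nodeL j' r' heA => exact ⟨_, .interchange k a b _ B C D, .nodeL k _ (.nodeL b B heA)⟩
      | nodeR j' l' heB => exact ⟨_, .interchange k a b A _ C D, .nodeL k _ (.nodeR b A heB)⟩
    | nodeR j l' he' =>
      cases he' with
      | nodeL j' r' heC => exact ⟨_, .interchange k a b A B _ D, .nodeR k _ (.nodeL a D heC)⟩
      | nodeR j' l'' heD => exact ⟨_, .interchange k a b A B C _, .nodeR k _ (.nodeR a C heD)⟩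
  | congrL k r hm ih =>
    rename_i l l'
    cases he with
    | nodeL j r' he' =>
      obtain ⟨tl, hm', he''⟩ := ih he'
      exact ⟨node k tl r, .congrL k r hm', .nodeL k r he''⟩
    | nodeR j l'' he' => exact ⟨node k l' _, .congrL k _ hm, .nodeR k l' he'⟩
  | congrR k l hm ih =>
    rename_i r r'
    cases he with
    | nodeL j r'' he' => exact ⟨node _ _ r', .congrR k _ hm, .nodeL k r' he'⟩
    | nodeR j l' he' =>
      obtain ⟨tr, hm', he''⟩ := ih he'
      exact ⟨node k l tr, .congrR k l hm', .nodeR k l he''⟩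

lemma lift_path {M : ℕ} {s₀ t₀ : NTree} (h : Relation.ReflTransGen MV s₀ t₀)
    (hM : ∀ j ∈ seq s₀, j < M) :
    ∀ {s : NTree}, Exp M s₀ s → ∃ t, Exp M t₀ t ∧ Relation.ReflTransGen MV s t := by
  induction h with
  | refl => exact fun he => ⟨_, he, .refl⟩
  | tail hpath hstep ih =>
    rename_i c d
    intro s he
    obtain ⟨u, heu, pu⟩ := ih he
    obtain ⟨t, hm, het⟩ := lift_step hstep.1 heu
    have hMc : ∀ j ∈ seq c, j < M := fun j hj => hM j ((mv_path_perm hpath).mem_iff.mpr hj)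
    have hMd : ∀ j ∈ seq d, j < M := fun j hj =>
      hMc j ((lmove_seq_perm hstep.1).mem_iff.mpr hj)
    exact ⟨t, het, pu.tail ⟨hm, exp_lv heu hstep.2.1 hMc, exp_lv het hstep.2.2 hMd⟩⟩

end NTree

namespace NTree

/-- The right comb with the given (sorted) list of levels. -/
def Rcomb : List ℕ → NTree
  | [] => leaf false
  | a :: L => node a (leaf false) (Rcomb L)

lemma seq_Rcomb : ∀ L, seq (Rcomb L) = L
  | [] => rfl
  | a :: L => by simp [Rcomb, seq, seq_Rcomb L]

lemma nodules_Rcomb : ∀ L, nodules (Rcomb L) = 0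
  | [] => rfl
  | a :: L => by simp [Rcomb, nodules, nodules_Rcomb L]

lemma lv_Rcomb : ∀ L, List.Pairwise (· < ·) L → LevelValid (Rcomb L)
  | [], _ => trivial
  | a :: L, h => by
    refine ⟨nofun, ?_, trivial, lv_Rcomb L h.of_cons⟩
    intro m hm
    rw [seq_Rcomb] at hm
    exact List.rel_of_pairwise_cons h hm

lemma lv_cherry {M : ℕ} : LevelValid (node M (leaf false) (leaf false)) :=
  ⟨nofun, nofun, trivial, trivial⟩

lemma claimC {M : ℕ} : ∀ (L : List ℕ) (a : ℕ), List.Pairwise (· < ·) L → (∀ j ∈ L, j < M) →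
    (∀ j ∈ L, a < j) → a < M →
    Relation.ReflTransGen MV (node a (node M (leaf false) (leaf false)) (Rcomb L))
      (Rcomb (a :: (L ++ [M]))) := by
  intro L
  induction L with
  | nil =>
    intro a _ _ _ haM
    refine Relation.ReflTransGen.single
      ⟨.assoc a M (leaf false) (leaf false) (leaf false), ?_, ?_⟩
    · exact ⟨by simp [seq]; omega, nofun, lv_cherry, trivial⟩
    · exact ⟨nofun, by simp [seq, Rcomb]; omega, trivial, lv_cherry⟩
  | cons b L' ih =>
    intro a hs hM ha haM
    have hs' : List.Pairwise (· < ·) L' := hs.of_cons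
    have hbL' : ∀ j ∈ L', b < j := fun j hj => List.rel_of_pairwise_cons hs hj
    have hbM : b < M := hM b (by simp)
    have hab : a < b := ha b (by simp)
    have hM' : ∀ j ∈ L', j < M := fun j hj => hM j (by simp [hj])
    have ha' : ∀ j ∈ L', a < j := fun j hj => ha j (by simp [hj])
    have hT : LevelValid (Rcomb L') := lv_Rcomb L' hs'
    have hbT : ∀ m ∈ seq (Rcomb L'), b < m := by
      rw [seq_Rcomb]; exact hbL'
    have haT : ∀ m ∈ seq (Rcomb L'), a < m := by
      rw [seq_Rcomb]; exact ha'
    -- s0 = node a cherry (node b leaf T)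
    have lv0 : LevelValid (node a (node M (leaf false) (leaf false)) (Rcomb (b :: L'))) := by
      refine ⟨by simp [seq]; omega, ?_, lv_cherry, lv_Rcomb _ hs⟩
      rw [seq_Rcomb]; exact ha
    have lv1 : LevelValid (node a (node b (node M (leaf false) (leaf false)) (leaf false))
        (Rcomb L')) := by
      refine ⟨by simp [seq]; omega, haT, ⟨by simp [seq]; omega, nofun, lv_cherry, trivial⟩, hT⟩
    have lv2 : LevelValid (node a (node b (leaf false) (node M (leaf false) (leaf false)))
        (Rcomb L')) := by
      refine ⟨by simp [seq]; omega, haT, ⟨nofun, by simp [seq]; omega, trivial, lv_cherry⟩, hT⟩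
    have lv3 : LevelValid (node a (leaf false)
        (node b (node M (leaf false) (leaf false)) (Rcomb L'))) := by
      refine ⟨nofun, ?_, trivial, ⟨by simp [seq]; omega, hbT, lv_cherry, hT⟩⟩
      simp only [seq, seq_Rcomb, List.mem_append, List.mem_cons, List.mem_singleton]
      rintro m (hm | rfl | hm)
      · simp [seq] at hm; omega
      · exact hab
      · exact ha' m hm
    have step1 : MV (node a (node M (leaf false) (leaf false)) (Rcomb (b :: L')))
        (node a (node b (node M (leaf false) (leaf false)) (leaf false)) (Rcomb L')) :=
      ⟨.assocInv a b _ (leaf false) (Rcomb L'), lv0, lv1⟩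
    have step2 : MV _ (node a (node b (leaf false) (node M (leaf false) (leaf false)))
        (Rcomb L')) := ⟨.congrL a (Rcomb L') (.assoc b M (leaf false) (leaf false) (leaf false)),
          lv1, lv2⟩
    have step3 : MV _ (node a (leaf false)
        (node b (node M (leaf false) (leaf false)) (Rcomb L'))) :=
      ⟨.assoc a b (leaf false) (node M (leaf false) (leaf false)) (Rcomb L'), lv2, lv3⟩
    have tail : Relation.ReflTransGen MV
        (node a (leaf false) (node b (node M (leaf false) (leaf false)) (Rcomb L')))
        (node a (leaf false) (Rcomb (b :: (L' ++ [M])))) := by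
      refine liftR a (leaf false) trivial nofun (ih b hs' hM' hbL' hbM) ?_
      simp only [seq, seq_Rcomb, List.mem_append, List.mem_cons, List.mem_singleton]
      rintro m (hm | rfl | hm)
      · simp [seq] at hm; omega
      · exact hab
      · exact ha' m hm
    have : Rcomb (a :: ((b :: L') ++ [M])) = node a (leaf false) (Rcomb (b :: (L' ++ [M]))) := by
      simp [Rcomb]
    rw [this]
    exact ((Relation.ReflTransGen.head step1 (Relation.ReflTransGen.head step2
      (Relation.ReflTransGen.single step3)))).trans tail

lemma claimB {M : ℕ} : ∀ (L : List ℕ) (u : NTree), List.Pairwise (· < ·) L → (∀ j ∈ L, j < M) →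
    Exp M (Rcomb L) u → Relation.ReflTransGen MV u (Rcomb (L ++ [M])) := by
  intro L
  induction L with
  | nil =>
    intro u _ _ he
    cases he
    exact .refl
  | cons b L' ih =>
    intro u hs hM he
    have hs' : List.Pairwise (· < ·) L' := hs.of_cons
    have hbL' : ∀ j ∈ L', b < j := fun j hj => List.rel_of_pairwise_cons hs hj
    have hbM : b < M := hM b (by simp)
    have hM' : ∀ j ∈ L', j < M := fun j hj => hM j (by simp [hj])
    cases he with
    | nodeL j r he' =>
      cases he'
      have : ((b :: L') ++ [M]) = b :: (L' ++ [M]) := by simp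
      rw [this]
      exact claimC L' b hs' hM' hbL' hbM
    | nodeR j l he' =>
      have hr := ih _ hs' hM' he'
      rename_i r'
      have hcond : ∀ m ∈ seq r', b < m := by
        intro m hm
        rcases List.mem_cons.mp ((exp_seq he').mem_iff.mp hm) with h | h
        · exact h ▸ hbM
        · rw [seq_Rcomb] at h; exact hbL' m h
      have := liftR b (leaf false) trivial nofun hr hcond
      have heq : Rcomb ((b :: L') ++ [M]) = node b (leaf false) (Rcomb (L' ++ [M])) := by
        simp [Rcomb]
      rw [heq]
      exact this

end NTree


namespace NTree

lemma canon : ∀ (N : ℕ) (t : NTree), (seq t).length ≤ N → LevelValid t → (seq t).Nodup →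
    nodules t = 0 →
    Relation.ReflTransGen MV t (Rcomb ((seq t).insertionSort (· ≤ ·))) := by
  intro N
  induction N with
  | zero =>
    intro t hlen hv hnd h0
    have h : seq t = [] := List.length_eq_zero_iff.mp (Nat.le_zero.mp hlen)
    rw [eq_leaf_false h h0]
    exact .refl
  | succ N ih =>
    intro t hlen hv hnd h0
    by_cases h : seq t = []
    · rw [eq_leaf_false h h0]; exact .refl
    set S := (seq t).insertionSort (· ≤ ·) with hS
    have hSp : S.Perm (seq t) := List.perm_insertionSort _ _
    have hSne : S ≠ [] := fun hc => h (List.length_eq_zero_iff.mp (by rw [← hSp.length_eq, hc]; rfl))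
    have hSle : List.Pairwise (· ≤ ·) S := List.pairwise_insertionSort _ _
    have hSnd : S.Nodup := hSp.nodup_iff.mpr hnd
    have hSlt : List.Pairwise (· < ·) S :=
      (hSle.and hSnd).imp (fun hab => lt_of_le_of_ne hab.1 hab.2)
    set M := S.getLast hSne with hM
    set L₀ := S.dropLast with hL₀
    have hSeq : L₀ ++ [M] = S := List.dropLast_append_getLast hSne
    have hL₀lt : ∀ j ∈ L₀, j < M := by
      intro j hj
      have h' : List.Pairwise (· < ·) (L₀ ++ [M]) := by rw [hSeq]; exact hSlt
      exact (List.pairwise_append.mp h').2.2 j hj M (by simp)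
    have hL₀s : List.Pairwise (· < ·) L₀ := List.Pairwise.sublist (List.dropLast_sublist S) hSlt
    have hL₀nd : L₀.Nodup := List.Nodup.sublist (List.dropLast_sublist S) hSnd
    have hMt : M ∈ seq t := hSp.subset (List.getLast_mem hSne)
    have hle : ∀ j ∈ seq t, j ≤ M := by
      intro j hj
      have : j ∈ L₀ ++ [M] := by rw [hSeq]; exact hSp.mem_iff.mpr hj
      rcases List.mem_append.mp this with h' | h'
      · exact le_of_lt (hL₀lt j h')
      · simp at h'; omega
    obtain ⟨t₀, he⟩ := collapse_exists t hv h0 hMt hle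
    have hseq : (seq t).Perm (M :: seq t₀) := exp_seq he
    have ht₀L : (seq t₀).Perm L₀ := by
      have h1 : (M :: seq t₀).Perm (M :: L₀) := by
        refine hseq.symm.trans ?_
        refine (hSp.symm.trans ?_)
        rw [← hSeq]
        exact List.perm_append_singleton M L₀
      exact h1.cons_inv
    have hnd₀ : (seq t₀).Nodup := ht₀L.nodup_iff.mpr hL₀nd
    have hv₀ : LevelValid t₀ := exp_lv_inv he hv
    have h0₀ : nodules t₀ = 0 := (exp_nodules he) ▸ h0
    have hlen₀ : (seq t₀).length ≤ N := by
      have h1 := ht₀L.length_eq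
      have h2 := congrArg List.length hSeq
      have h3 := hSp.length_eq
      simp only [List.length_append, List.length_cons, List.length_nil] at h2
      omega
    have path₀ := ih t₀ hlen₀ hv₀ hnd₀ h0₀
    have hsort : (seq t₀).insertionSort (· ≤ ·) = L₀ := by
      refine List.Perm.eq_of_pairwise' (List.pairwise_insertionSort _ _) (hL₀s.imp le_of_lt)
        ((List.perm_insertionSort _ _).trans ht₀L)
    rw [hsort] at path₀
    have hMt₀ : ∀ j ∈ seq t₀, j < M := fun j hj => hL₀lt j (ht₀L.subset hj)
    obtain ⟨u, heu, pu⟩ := lift_path path₀ hMt₀ he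
    have pend := claimB L₀ u hL₀s hL₀lt heu
    rw [hSeq] at pend
    exact pu.trans pend

end NTree


/-- Any two internally resolved binary trees with nodules of the same length
`n` are connected by a finite sequence of primitive arrows (branch
interchanges, reattachments, prunings, and graftings of nodules). -/
theorem irbn_connected (n : ℕ) (s t : NTree)
    (hs : NTree.ValidN s) (ht : NTree.ValidN t)
    (hls : NTree.len s = n) (hlt : NTree.len t = n) :
    Relation.ReflTransGen NTree.NMoveValid s t := by
  open NTree in
  obtain ⟨u, pu, hvu, hlu, hdu⟩ := pruneAll _ s le_rfl hs
  obtain ⟨v, pv, hvv, hlv, hdv⟩ := pruneAll _ t le_rfl ht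
  rw [hls] at hlu; rw [hlt] at hlv
  have key : Relation.ReflTransGen NMoveValid u v →
      Relation.ReflTransGen NMoveValid s t := fun h =>
    (pu.trans h).trans ((@Relation.ReflTransGen.symmetric _ _ ⟨fun a b h => nmv_symmetric h⟩).symm _ _ pv)
  apply key
  rcases n with _ | m
  · have hu : u = leaf true := by
      rcases hdu with h | h
      · exfalso; have := seq_length u; omega
      · exact h
    have hv' : v = leaf true := by
      rcases hdv with h | h
      · exfalso; have := seq_length v; omega
      · exact h
    rw [hu, hv']
  · have h0u : nodules u = 0 := by
      rcases hdu with h | h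
      · exact h
      · exfalso; rw [h] at hlu; simp [len] at hlu
    have h0v : nodules v = 0 := by
      rcases hdv with h | h
      · exact h
      · exfalso; rw [h] at hlv; simp [len] at hlv
    obtain ⟨nu, hpu, hlvu⟩ := hvu
    obtain ⟨nv, hpv, hlvv⟩ := hvv
    have hnu : nu = m := by
      have h1 := seq_length u
      have h2 := hpu.length_eq
      simp only [List.length_range] at h2
      omega
    have hnv : nv = m := by
      have h1 := seq_length v
      have h2 := hpv.length_eq
      simp only [List.length_range] at h2
      omega
    rw [hnu] at hpu; rw [hnv] at hpv
    have hndu : (seq u).Nodup := hpu.nodup_iff.mpr (List.nodup_range (n := m))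
    have hndv : (seq v).Nodup := hpv.nodup_iff.mpr (List.nodup_range (n := m))
    have Pu := canon _ u le_rfl hlvu hndu h0u
    have Pv := canon _ v le_rfl hlvv hndv h0v
    have hsorteq : (seq u).insertionSort (· ≤ ·) = (seq v).insertionSort (· ≤ ·) := by
      refine List.Perm.eq_of_pairwise' (List.pairwise_insertionSort _ _)
        (List.pairwise_insertionSort _ _) ?_
      exact ((List.perm_insertionSort _ _).trans (hpu.trans hpv.symm)).trans
        (List.perm_insertionSort _ _).symm
    rw [hsorteq] at Pu
    obtain ⟨Qu, _⟩ := mv_to_nmv Pu ⟨m, hpu, hlvu⟩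
    obtain ⟨Qv, _⟩ := mv_to_nmv Pv ⟨m, hpv, hlvv⟩
    exact Qu.trans ((@Relation.ReflTransGen.symmetric _ _ ⟨fun a b h => nmv_symmetric h⟩).symm _ _ Qv)
end

section
/- For any two numbered resolved binary trees of length n, there is a finite sequence of primitive arrows (RB-tree moves together with subtree swaps at internal nodes) transforming one into the other. -/
/-- A numbered resolved binary tree: every node carries a level and every leaf
additionally carries a number. -/
inductive QTree : Type
  | leaf (lvl : ℕ) (num : ℕ) : QTree
  | node (lvl : ℕ) (l r : QTree) : QTree

namespace QTree

/-- Left-to-right sequence of the levels of all nodes. -/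
def seq : QTree → List ℕ
  | leaf k _ => [k]
  | node k l r => seq l ++ k :: seq r

/-- Left-to-right sequence of the leaf numbers. -/
def nums : QTree → List ℕ
  | leaf _ i => [i]
  | node _ l r => nums l ++ nums r

/-- Number of leaves. -/
def leafCount : QTree → ℕ
  | leaf _ _ => 1
  | node _ l r => leafCount l + leafCount r

/-- Every node lies strictly below all nodes of its subtrees. -/
def LevelValid : QTree → Prop
  | leaf _ _ => True
  | node k l r => (∀ m ∈ seq l, k < m) ∧ (∀ m ∈ seq r, k < m) ∧ LevelValid l ∧ LevelValid r

/-- A numbered RB tree (NRB tree) of length `n`: an RB tree of length `n`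
whose leaves are bijectively numbered by `1, …, n`. -/
def IsNRB (n : ℕ) (t : QTree) : Prop :=
  leafCount t = n ∧ (seq t).Perm (List.range (2 * n - 1)) ∧ LevelValid t ∧
    (nums t).Perm ((List.range n).map (· + 1))

/-- Root level. -/
def rootLvl : QTree → ℕ
  | leaf k _ => k
  | node k _ _ => k

/-- Replace the root level. -/
def setLvl (m : ℕ) : QTree → QTree
  | leaf _ i => leaf m i
  | node _ l r => node m l r

/-- Primitive moves on NRB trees: the `RBTree` moves (edge reattachment and
sibling level interchange) together with, at each internal node, the swap of
the two subtrees rooted at its children (commutativity `c`). -/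
inductive Move : QTree → QTree → Prop
  | assoc (k l : ℕ) (A B C : QTree) :
      Move (node k (node l A B) C) (node k A (node l B C))
  | assocInv (k l : ℕ) (A B C : QTree) :
      Move (node k A (node l B C)) (node k (node l A B) C)
  | interchange (k : ℕ) (x y : QTree) :
      Move (node k x y) (node k (setLvl (rootLvl y) x) (setLvl (rootLvl x) y))
  | swap (k : ℕ) (x y : QTree) :
      Move (node k x y) (node k y x)
  | congrL (k : ℕ) {l l' : QTree} (r : QTree) : Move l l' → Move (node k l r) (node k l' r)
  | congrR (k : ℕ) (l : QTree) {r r' : QTree} : Move r r' → Move (node k l r) (node k l r')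

/-- A primitive arrow of the groupoid `NRBTree`. -/
def MoveNRB (n : ℕ) (s t : QTree) : Prop := Move s t ∧ IsNRB n s ∧ IsNRB n t

end QTree
namespace QTree

@[simp] lemma rootLvl_setLvl (m : ℕ) (t : QTree) : rootLvl (setLvl m t) = m := by
  cases t <;> rfl

@[simp] lemma setLvl_setLvl (m m' : ℕ) (t : QTree) : setLvl m (setLvl m' t) = setLvl m t := by
  cases t <;> rfl

@[simp] lemma setLvl_rootLvl (t : QTree) : setLvl (rootLvl t) t = t := by
  cases t <;> rfl

@[simp] lemma nums_setLvl (m : ℕ) (t : QTree) : nums (setLvl m t) = nums t := by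
  cases t <;> rfl

@[simp] lemma leafCount_setLvl (m : ℕ) (t : QTree) : leafCount (setLvl m t) = leafCount t := by
  cases t <;> rfl

lemma seq_setLvl_perm (m : ℕ) (t : QTree) :
    (rootLvl t :: seq (setLvl m t)).Perm (m :: seq t) := by
  cases t with
  | leaf k i => simpa [seq, rootLvl, setLvl] using List.Perm.swap m k []
  | node k l r =>
    simp only [seq, rootLvl, setLvl]
    exact ((List.Perm.cons k List.perm_middle).trans (List.Perm.swap m k _)).trans
      (List.Perm.cons m List.perm_middle.symm)

lemma seq_ne_nil (t : QTree) : seq t ≠ [] := by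
  cases t <;> simp [seq]

lemma rootLvl_mem_seq (t : QTree) : rootLvl t ∈ seq t := by
  cases t <;> simp [seq, rootLvl]

lemma leafCount_pos (t : QTree) : 0 < leafCount t := by
  induction t with
  | leaf _ _ => simp [leafCount]
  | node _ l r ihl ihr => simp [leafCount]; omega

lemma length_nums (t : QTree) : (nums t).length = leafCount t := by
  induction t with
  | leaf _ _ => rfl
  | node _ l r ihl ihr => simp [nums, leafCount, ihl, ihr]

lemma rootLvl_le_seq {t : QTree} (h : LevelValid t) : ∀ m ∈ seq t, rootLvl t ≤ m := by
  cases t with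
  | leaf k i => intro m hm; simp [seq] at hm; simp [rootLvl, hm]
  | node k l r =>
    obtain ⟨h1, h2, _, _⟩ := h
    intro m hm
    simp [seq, rootLvl] at hm ⊢
    rcases hm with h | h | h
    · exact le_of_lt (h1 _ h)
    · omega
    · exact le_of_lt (h2 _ h)

lemma Move.leafCount_eq {a b : QTree} (h : Move a b) : leafCount a = leafCount b := by
  induction h with
  | assoc k l A B C => simp [leafCount]; omega
  | assocInv k l A B C => simp [leafCount]; omega
  | interchange k x y => simp [leafCount]
  | swap k x y => simp [leafCount]; omega
  | congrL k r _ ih => simp [leafCount, ih]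
  | congrR k l _ ih => simp [leafCount, ih]

lemma Move.nums_perm {a b : QTree} (h : Move a b) : (nums a).Perm (nums b) := by
  induction h with
  | assoc k l A B C => simp [nums, List.append_assoc]
  | assocInv k l A B C => simp [nums, List.append_assoc]
  | interchange k x y => simp [nums]
  | swap k x y => exact List.perm_append_comm
  | congrL k r _ ih => exact ih.append_right _
  | congrR k l _ ih => exact ih.append_left _

lemma middle_swap (k l : ℕ) (b c : List ℕ) :
    (l :: (b ++ k :: c)).Perm (k :: (b ++ l :: c)) :=
  ((List.Perm.cons l List.perm_middle).trans (List.Perm.swap k l _)).trans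
    (List.Perm.cons k List.perm_middle.symm)

lemma Move.seq_perm {a b : QTree} (h : Move a b) : (seq a).Perm (seq b) := by
  induction h with
  | assoc k l A B C =>
    show ((seq A ++ l :: seq B) ++ k :: seq C).Perm (seq A ++ k :: (seq B ++ l :: seq C))
    rw [List.append_assoc, List.cons_append]
    exact List.Perm.append_left _ (middle_swap k l _ _)
  | assocInv k l A B C =>
    show (seq A ++ k :: (seq B ++ l :: seq C)).Perm ((seq A ++ l :: seq B) ++ k :: seq C)
    rw [List.append_assoc, List.cons_append]
    exact List.Perm.append_left _ (middle_swap l k _ _)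
  | interchange k x y =>
    show (seq x ++ k :: seq y).Perm
      (seq (setLvl (rootLvl y) x) ++ k :: seq (setLvl (rootLvl x) y))
    have h1 := seq_setLvl_perm (rootLvl y) x
    have h2 := seq_setLvl_perm (rootLvl x) y
    have key : (seq (setLvl (rootLvl y) x) ++ seq (setLvl (rootLvl x) y)).Perm (seq x ++ seq y) := by
      have hcat := h1.append h2
      have hL : ((rootLvl x :: seq (setLvl (rootLvl y) x)) ++ rootLvl y :: seq (setLvl (rootLvl x) y)).Perm
          (rootLvl x :: rootLvl y :: (seq (setLvl (rootLvl y) x) ++ seq (setLvl (rootLvl x) y))) := by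
        rw [List.cons_append]
        exact List.Perm.cons _ List.perm_middle
      have hR : ((rootLvl y :: seq x) ++ rootLvl x :: seq y).Perm
          (rootLvl x :: rootLvl y :: (seq x ++ seq y)) := by
        rw [List.cons_append]
        exact (List.Perm.cons _ List.perm_middle).trans (List.Perm.swap _ _ _)
      have := (hL.symm.trans hcat).trans hR
      exact (this.cons_inv).cons_inv
    refine (List.perm_middle).trans (((List.Perm.cons k key.symm)).trans List.perm_middle.symm)
  | swap k x y =>
    show (seq x ++ k :: seq y).Perm (seq y ++ k :: seq x)
    exact (List.perm_middle).trans ((List.Perm.cons k List.perm_append_comm).trans List.perm_middle.symm)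
  | congrL k r _ ih => exact ih.append_right _
  | congrR k l _ ih => exact List.Perm.append_left _ (List.Perm.cons k ih)

lemma Move.symm {a b : QTree} (h : Move a b) : Move b a := by
  induction h with
  | assoc k l A B C => exact Move.assocInv k l A B C
  | assocInv k l A B C => exact Move.assoc k l A B C
  | interchange k x y =>
    have := Move.interchange k (setLvl (rootLvl y) x) (setLvl (rootLvl x) y)
    simpa using this
  | swap k x y => exact Move.swap k y x
  | congrL k r _ ih => exact Move.congrL k r ih
  | congrR k l _ ih => exact Move.congrR k l ih

/-- A valid step: a move between two level-valid trees. -/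
def Stp (a b : QTree) : Prop := Move a b ∧ LevelValid a ∧ LevelValid b

/-- Reachability by valid steps. -/
def Rch (a b : QTree) : Prop := Relation.ReflTransGen Stp a b

lemma Stp.symm {a b : QTree} (h : Stp a b) : Stp b a := ⟨h.1.symm, h.2.2, h.2.1⟩

lemma Rch.symm {a b : QTree} (h : Rch a b) : Rch b a := by
  induction h with
  | refl => exact Relation.ReflTransGen.refl
  | tail _ hstep ih => exact Relation.ReflTransGen.trans (Relation.ReflTransGen.single hstep.symm) ih

lemma Rch.trans {a b c : QTree} (h : Rch a b) (h' : Rch b c) : Rch a c :=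
  Relation.ReflTransGen.trans h h'

lemma Rch.single {a b : QTree} (h : Stp a b) : Rch a b := Relation.ReflTransGen.single h

lemma Rch.seq_perm {a b : QTree} (h : Rch a b) : (seq a).Perm (seq b) := by
  induction h with
  | refl => exact List.Perm.refl _
  | tail _ hstep ih => exact ih.trans hstep.1.seq_perm

lemma Rch.nums_perm {a b : QTree} (h : Rch a b) : (nums a).Perm (nums b) := by
  induction h with
  | refl => exact List.Perm.refl _
  | tail _ hstep ih => exact ih.trans hstep.1.nums_perm

lemma Rch.leafCount_eq {a b : QTree} (h : Rch a b) : leafCount a = leafCount b := by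
  induction h with
  | refl => rfl
  | tail _ hstep ih => exact ih.trans hstep.1.leafCount_eq

lemma Rch.valid {a b : QTree} (ha : LevelValid a) (h : Rch a b) : LevelValid b := by
  induction h with
  | refl => exact ha
  | tail _ hstep _ => exact hstep.2.2

/-- Lift reachability through the left child of a node. -/
lemma Rch.liftL {l l' : QTree} (k : ℕ) (r : QTree) (h : Rch l l')
    (hv : LevelValid (node k l r)) : Rch (node k l r) (node k l' r) := by
  induction h with
  | refl => exact Relation.ReflTransGen.refl
  | @tail b c hlb hbc ih =>
    refine Relation.ReflTransGen.tail ih ⟨Move.congrL k r hbc.1, ?_, ?_⟩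
    · obtain ⟨h1, h2, h3, h4⟩ := hv
      exact ⟨fun m hm => h1 m ((Rch.seq_perm hlb).mem_iff.mpr hm), h2, hbc.2.1, h4⟩
    · obtain ⟨h1, h2, h3, h4⟩ := hv
      exact ⟨fun m hm => h1 m (((Rch.seq_perm hlb).trans hbc.1.seq_perm).mem_iff.mpr hm), h2, hbc.2.2, h4⟩

/-- Lift reachability through the right child of a node. -/
lemma Rch.liftR {r r' : QTree} (k : ℕ) (l : QTree) (h : Rch r r')
    (hv : LevelValid (node k l r)) : Rch (node k l r) (node k l r') := by
  induction h with
  | refl => exact Relation.ReflTransGen.refl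
  | @tail b c hlb hbc ih =>
    refine Relation.ReflTransGen.tail ih ⟨Move.congrR k l hbc.1, ?_, ?_⟩
    · obtain ⟨h1, h2, h3, h4⟩ := hv
      exact ⟨h1, fun m hm => h2 m ((Rch.seq_perm hlb).mem_iff.mpr hm), h3, hbc.2.1⟩
    · obtain ⟨h1, h2, h3, h4⟩ := hv
      exact ⟨h1, fun m hm => h2 m (((Rch.seq_perm hlb).trans hbc.1.seq_perm).mem_iff.mpr hm), h3, hbc.2.2⟩

/-- Right combs. -/
inductive IsComb : QTree → Prop
  | leaf (k i : ℕ) : IsComb (leaf k i)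
  | node (k m i : ℕ) {t : QTree} (h : IsComb t) : IsComb (node k (leaf m i) t)

lemma nodup_node_ne {k : ℕ} {X Y : QTree} (hnd : (seq (node k X Y)).Nodup)
    {a b : ℕ} (ha : a ∈ seq X) (hb : b ∈ seq Y) : a ≠ b := by
  have h : (seq X ++ k :: seq Y).Nodup := hnd
  rw [List.nodup_append] at h
  intro hEq
  exact h.2.2 _ ha b (by simp [hEq, hb]) hEq

lemma nodup_left {k : ℕ} {X Y : QTree} (hnd : (seq (node k X Y)).Nodup) : (seq X).Nodup := by
  have h : (seq X ++ k :: seq Y).Nodup := hnd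
  rw [List.nodup_append] at h
  exact h.1

lemma nodup_right {k : ℕ} {X Y : QTree} (hnd : (seq (node k X Y)).Nodup) : (seq Y).Nodup := by
  have h : (seq X ++ k :: seq Y).Nodup := hnd
  rw [List.nodup_append] at h
  exact h.2.1.of_cons

lemma nodup_of_rch {a b : QTree} (h : Rch a b) (hnd : (seq a).Nodup) : (seq b).Nodup :=
  ((Rch.seq_perm h).nodup_iff).mp hnd

lemma merge_comb : ∀ N : ℕ, ∀ X Y : QTree, ∀ k : ℕ, leafCount X + leafCount Y ≤ N →
    LevelValid (node k X Y) → (seq (node k X Y)).Nodup → IsComb X → IsComb Y →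
    ∃ c : QTree, Rch (node k X Y) c ∧ IsComb c := by
  intro N
  induction N with
  | zero =>
    intro X Y k hN
    have := leafCount_pos X; have := leafCount_pos Y; omega
  | succ N ih =>
    intro X Y k hN hv hnd hX hY
    cases hX with
    | leaf p i => exact ⟨node k (leaf p i) Y, Relation.ReflTransGen.refl, IsComb.node _ _ _ hY⟩
    | @node l₁ p i X₁ hX₁ =>
      -- X = node l₁ (leaf p i) X₁
      obtain ⟨h1, h2, h3, h4⟩ := hv
      have g2 : ∀ x ∈ seq X₁, l₁ < x := h3.2.1
      have g4 : LevelValid X₁ := h3.2.2.2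
      cases hY with
      | leaf q j =>
        exact ⟨node k (leaf q j) (node l₁ (leaf p i) X₁),
          Rch.single ⟨Move.swap k _ _, ⟨h1, h2, h3, trivial⟩, ⟨h2, h1, trivial, h3⟩⟩,
          IsComb.node _ _ _ (IsComb.node _ _ _ hX₁)⟩
      | @node m₁ q j Y₁ hY₁ =>
        -- Y = node m₁ (leaf q j) Y₁
        have hvY : LevelValid (node m₁ (leaf q j) Y₁) := h4
        have hvX : LevelValid (node l₁ (leaf p i) X₁) := h3
        have hlY : ∀ x ∈ seq (node m₁ (leaf q j) Y₁), m₁ ≤ x := rootLvl_le_seq hvY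
        have hlX : ∀ x ∈ seq (node l₁ (leaf p i) X₁), l₁ ≤ x := rootLvl_le_seq hvX
        have hlm : l₁ ≠ m₁ := nodup_node_ne hnd (by simp [seq]) (by simp [seq])
        have hvfull : LevelValid (node k (node l₁ (leaf p i) X₁) (node m₁ (leaf q j) Y₁)) :=
          ⟨h1, h2, h3, h4⟩
        rcases Nat.lt_or_ge l₁ m₁ with hlt | hge
        · -- assoc : node k (leaf p i) (node l₁ X₁ Y)
          have hvT : LevelValid (node k (leaf p i) (node l₁ X₁ (node m₁ (leaf q j) Y₁))) := by
            refine ⟨?_, ?_, trivial, ?_, ?_, g4, hvY⟩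
            · intro x hx; simp [seq] at hx; subst hx
              exact h1 _ (by simp [seq])
            · intro x hx
              simp only [seq, List.mem_append, List.mem_cons] at hx
              rcases hx with hx | hx | hx
              · exact h1 x (by simp [seq]; tauto)
              · subst hx; exact h1 _ (by simp [seq])
              · exact h2 x (by simp [seq]; tauto)
            · exact g2
            · intro x hx; exact lt_of_lt_of_le hlt (hlY x hx)
          have hstep : Stp (node k (node l₁ (leaf p i) X₁) (node m₁ (leaf q j) Y₁))
              (node k (leaf p i) (node l₁ X₁ (node m₁ (leaf q j) Y₁))) :=
            ⟨Move.assoc k l₁ (leaf p i) X₁ _, hvfull, hvT⟩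
          have hnd' : (seq (node l₁ X₁ (node m₁ (leaf q j) Y₁))).Nodup := by
            have h' := nodup_of_rch (Rch.single hstep) hnd
            exact nodup_right h'
          have hcnt : leafCount X₁ + leafCount (node m₁ (leaf q j) Y₁) ≤ N := by
            simp [leafCount] at hN ⊢
            omega
          obtain ⟨c, hc, hcomb⟩ := ih X₁ (node m₁ (leaf q j) Y₁) l₁ hcnt hvT.2.2.2 hnd' hX₁
            (IsComb.node _ _ _ hY₁)
          refine ⟨node k (leaf p i) c, ?_, IsComb.node _ _ _ hcomb⟩
          exact Rch.trans (Rch.single hstep) (Rch.liftR k (leaf p i) hc hvT)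
        · -- m₁ < l₁ : swap then assoc
          have hlt : m₁ < l₁ := lt_of_le_of_ne hge (Ne.symm hlm)
          have hvswap : LevelValid (node k (node m₁ (leaf q j) Y₁) (node l₁ (leaf p i) X₁)) :=
            ⟨h2, h1, h4, h3⟩
          have hstep1 : Stp (node k (node l₁ (leaf p i) X₁) (node m₁ (leaf q j) Y₁))
              (node k (node m₁ (leaf q j) Y₁) (node l₁ (leaf p i) X₁)) :=
            ⟨Move.swap k _ _, hvfull, hvswap⟩
          have hvT : LevelValid (node k (leaf q j) (node m₁ Y₁ (node l₁ (leaf p i) X₁))) := by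
            refine ⟨?_, ?_, trivial, ?_, ?_, h4.2.2.2, hvX⟩
            · intro x hx; simp [seq] at hx; subst hx
              exact h2 _ (by simp [seq])
            · intro x hx
              simp only [seq, List.mem_append, List.mem_cons] at hx
              rcases hx with hx | hx | hx
              · exact h2 x (by simp [seq]; tauto)
              · subst hx; exact h2 _ (by simp [seq])
              · exact h1 x (by simp [seq]; tauto)
            · exact h4.2.1
            · intro x hx; exact lt_of_lt_of_le hlt (hlX x hx)
          have hstep2 : Stp (node k (node m₁ (leaf q j) Y₁) (node l₁ (leaf p i) X₁))
              (node k (leaf q j) (node m₁ Y₁ (node l₁ (leaf p i) X₁))) :=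
            ⟨Move.assoc k m₁ (leaf q j) Y₁ _, hvswap, hvT⟩
          have hnd' : (seq (node m₁ Y₁ (node l₁ (leaf p i) X₁))).Nodup := by
            have h' := nodup_of_rch (Rch.trans (Rch.single hstep1) (Rch.single hstep2)) hnd
            exact nodup_right h'
          have hcnt : leafCount Y₁ + leafCount (node l₁ (leaf p i) X₁) ≤ N := by
            simp [leafCount] at hN ⊢
            omega
          obtain ⟨c, hc, hcomb⟩ := ih Y₁ (node l₁ (leaf p i) X₁) m₁ hcnt hvT.2.2.2 hnd' hY₁
            (IsComb.node _ _ _ hX₁)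
          refine ⟨node k (leaf q j) c, ?_, IsComb.node _ _ _ hcomb⟩
          exact Rch.trans (Rch.single hstep1)
            (Rch.trans (Rch.single hstep2) (Rch.liftR k (leaf q j) hc hvT))

lemma combify : ∀ t : QTree, LevelValid t → (seq t).Nodup →
    ∃ c : QTree, Rch t c ∧ IsComb c := by
  intro t
  induction t with
  | leaf k i => exact fun _ _ => ⟨leaf k i, Relation.ReflTransGen.refl, IsComb.leaf k i⟩
  | node k L R ihL ihR =>
    intro hv hnd
    obtain ⟨h1, h2, h3, h4⟩ := hv
    obtain ⟨cL, hcL, hcombL⟩ := ihL h3 (nodup_left hnd)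
    obtain ⟨cR, hcR, hcombR⟩ := ihR h4 (nodup_right hnd)
    have hv0 : LevelValid (node k L R) := ⟨h1, h2, h3, h4⟩
    have step1 : Rch (node k L R) (node k cL R) := Rch.liftL k R hcL hv0
    have hv1 : LevelValid (node k cL R) := Rch.valid hv0 step1
    have step2 : Rch (node k cL R) (node k cL cR) := Rch.liftR k cL hcR hv1
    have hv2 : LevelValid (node k cL cR) := Rch.valid hv1 step2
    have hnd2 : (seq (node k cL cR)).Nodup :=
      nodup_of_rch (Rch.trans step1 step2) hnd
    obtain ⟨c, hc, hcomb⟩ := merge_comb (leafCount cL + leafCount cR) cL cR k le_rfl hv2 hnd2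
      hcombL hcombR
    exact ⟨c, Rch.trans (Rch.trans step1 step2) hc, hcomb⟩

lemma valid_facts {a p i b w j : ℕ} {T₂ : QTree}
    (hv : LevelValid (node a (leaf p i) (node b (leaf w j) T₂))) :
    a < p ∧ a < b ∧ a < w ∧ (∀ x ∈ seq T₂, a < x) ∧ b < w ∧ (∀ x ∈ seq T₂, b < x) ∧
      LevelValid T₂ := by
  obtain ⟨h1, h2, h3, h4⟩ := hv
  refine ⟨h1 p (by simp [seq]), h2 b (by simp [seq]), h2 w (by simp [seq]),
    fun x hx => h2 x (by simp [seq]; tauto), h4.1 w (by simp [seq]),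
    fun x hx => h4.2.1 x hx, h4.2.2.2⟩

/-- Validity of the shape `node a (node b (leaf p i) (leaf w j)) T₂`. -/
lemma valid_A {a p i b w j : ℕ} {T₂ : QTree} (hap : a < p) (hab : a < b) (haw : a < w)
    (haT : ∀ x ∈ seq T₂, a < x) (hbp : b < p) (hbw : b < w) (hvT : LevelValid T₂) :
    LevelValid (node a (node b (leaf p i) (leaf w j)) T₂) := by
  refine ⟨?_, haT, ⟨?_, ?_, trivial, trivial⟩, hvT⟩
  · intro x hx; simp [seq] at hx; rcases hx with rfl | rfl | rfl <;> omega
  · intro x hx; simp [seq] at hx; omega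
  · intro x hx; simp [seq] at hx; omega

/-- Validity of the shape `node a (leaf p i) (node b (leaf w j) T₂)`. -/
lemma valid_B {a p i b w j : ℕ} {T₂ : QTree} (hap : a < p) (hab : a < b) (haw : a < w)
    (haT : ∀ x ∈ seq T₂, a < x) (hbw : b < w) (hbT : ∀ x ∈ seq T₂, b < x)
    (hvT : LevelValid T₂) :
    LevelValid (node a (leaf p i) (node b (leaf w j) T₂)) := by
  refine ⟨?_, ?_, trivial, ?_, hbT, trivial, hvT⟩
  · intro x hx; simp [seq] at hx; omega
  · intro x hx; simp [seq] at hx; rcases hx with rfl | rfl | hx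
    · omega
    · omega
    · exact haT x hx
  · intro x hx; simp [seq] at hx; omega

/-- Swap the numbers of the first two leaves of a comb (when `b < p`). -/
lemma numswap {a p i b w j : ℕ} {T₂ : QTree} (hbp : b < p)
    (hv : LevelValid (node a (leaf p i) (node b (leaf w j) T₂))) :
    Rch (node a (leaf p i) (node b (leaf w j) T₂))
        (node a (leaf p j) (node b (leaf w i) T₂)) := by
  obtain ⟨hap, hab, haw, haT, hbw, hbT, hvT⟩ := valid_facts hv
  have hv1 := valid_A (i := i) (j := j) hap hab haw haT hbp hbw hvT
  have hv2 := valid_A (p := w) (i := i) (w := p) (j := j) haw hab hap haT hbw hbp hvT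
  have hv3 := valid_A (i := j) (j := i) hap hab haw haT hbp hbw hvT
  have hv4 := valid_B (i := j) (j := i) hap hab haw haT hbw hbT hvT
  have m2 : Move (node a (node b (leaf p i) (leaf w j)) T₂)
      (node a (node b (leaf w i) (leaf p j)) T₂) := by
    have := Move.congrL a T₂ (Move.interchange b (leaf p i) (leaf w j))
    simpa [setLvl, rootLvl] using this
  exact Rch.trans (Rch.single ⟨Move.assocInv a b (leaf p i) (leaf w j) T₂, hv, hv1⟩)
    (Rch.trans (Rch.single ⟨m2, hv1, hv2⟩)
      (Rch.trans (Rch.single ⟨Move.congrL a T₂ (Move.swap b (leaf w i) (leaf p j)), hv2, hv3⟩)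
        (Rch.single ⟨Move.assoc a b (leaf p j) (leaf w i) T₂, hv3, hv4⟩)))

/-- Swap the first two leaves of a comb (levels and numbers together). -/
lemma leafswap {a p i b q j : ℕ} {T₂ : QTree} (hne : p ≠ b)
    (hv : LevelValid (node a (leaf p i) (node b (leaf q j) T₂))) :
    ∃ b' p' : ℕ, Rch (node a (leaf p i) (node b (leaf q j) T₂))
        (node a (leaf q j) (node b' (leaf p' i) T₂)) := by
  obtain ⟨hap, hab, haq, haT, hbq, hbT, hvT⟩ := valid_facts hv
  rcases Nat.lt_or_ge b p with hbp | hge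
  · -- b < p : assocInv, swap, assoc
    refine ⟨b, p, ?_⟩
    have hv1 := valid_A (i := i) (j := j) hap hab haq haT hbp hbq hvT
    have hv2 := valid_A (p := q) (i := j) (w := p) (j := i) haq hab hap haT hbq hbp hvT
    have hv3 := valid_B (p := q) (i := j) (w := p) (j := i) haq hab hap haT hbp hbT hvT
    exact Rch.trans (Rch.single ⟨Move.assocInv a b (leaf p i) (leaf q j) T₂, hv, hv1⟩)
      (Rch.trans (Rch.single ⟨Move.congrL a T₂ (Move.swap b (leaf p i) (leaf q j)), hv1, hv2⟩)
        (Rch.single ⟨Move.assoc a b (leaf q j) (leaf p i) T₂, hv2, hv3⟩))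
  · -- p < b : interchange at root, then assocInv, swap, assoc
    have hpb : p < b := lt_of_le_of_ne hge hne
    refine ⟨p, b, ?_⟩
    have hpT : ∀ x ∈ seq T₂, p < x := fun x hx => lt_trans hpb (hbT x hx)
    have hv1 := valid_B (p := b) (i := i) (b := p) (w := q) (j := j) hab hap haq haT
      (lt_trans hpb hbq) hpT hvT
    have m1 : Move (node a (leaf p i) (node b (leaf q j) T₂))
        (node a (leaf b i) (node p (leaf q j) T₂)) := by
      have := Move.interchange a (leaf p i) (node b (leaf q j) T₂)
      simpa [setLvl, rootLvl] using this
    have hv2 := valid_A (p := b) (i := i) (b := p) (w := q) (j := j) hab hap haq haT hpb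
      (lt_trans hpb hbq) hvT
    have hv3 := valid_A (p := q) (i := j) (b := p) (w := b) (j := i) haq hap hab haT
      (lt_trans hpb hbq) hpb hvT
    have hv4 := valid_B (p := q) (i := j) (b := p) (w := b) (j := i) haq hap hab haT hpb hpT hvT
    exact Rch.trans (Rch.single ⟨m1, hv, hv1⟩)
      (Rch.trans (Rch.single ⟨Move.assocInv a p (leaf b i) (leaf q j) T₂, hv1, hv2⟩)
        (Rch.trans (Rch.single ⟨Move.congrL a T₂ (Move.swap p (leaf b i) (leaf q j)), hv2, hv3⟩)
          (Rch.single ⟨Move.assoc a p (leaf q j) (leaf b i) T₂, hv3, hv4⟩)))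

lemma exists_max {l : List ℕ} (h : l ≠ []) : ∃ q ∈ l, ∀ x ∈ l, x ≤ q := by
  induction l with
  | nil => exact absurd rfl h
  | cons a l ih =>
    rcases List.eq_nil_or_concat l with rfl | -
    · exact ⟨a, by simp, by simp⟩
    · rcases l.eq_nil_or_concat with rfl | _
      · exact ⟨a, by simp, by simp⟩
      · obtain ⟨q, hq, hmax⟩ := ih (by rintro rfl; simp_all)
        refine ⟨max a q, ?_, ?_⟩
        · rcases Nat.le_total a q with h' | h'
          · simp [Nat.max_eq_right h', hq]
          · simp [Nat.max_eq_left h']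
        · intro x hx
          rcases List.mem_cons.mp hx with rfl | hx
          · exact Nat.le_max_left _ _
          · exact le_trans (hmax x hx) (Nat.le_max_right _ _)

lemma nums_ne_nil (t : QTree) : nums t ≠ [] := by
  have h1 := length_nums t
  have h2 := leafCount_pos t
  intro h; rw [h] at h1; simp at h1; omega

/-- Extraction: any maximal level `q` and any number `j` can be brought to the
first leaf of a comb. -/
lemma extract : ∀ N : ℕ, ∀ X : QTree, leafCount X ≤ N → LevelValid X → (seq X).Nodup →
    IsComb X → 2 ≤ leafCount X → ∀ q j : ℕ, q ∈ seq X → (∀ m ∈ seq X, m ≤ q) →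
    j ∈ nums X → ∃ X₂ : QTree, Rch X (node (rootLvl X) (leaf q j) X₂) ∧ IsComb X₂ := by
  intro N
  induction N with
  | zero => intro X hN _ _ _ h2; omega
  | succ N ih =>
    intro X hN hv hnd hX hcnt q j hq hqmax hj
    cases hX with
    | leaf k i => simp [leafCount] at hcnt
    | @node a p i T hT =>
      -- X = node a (leaf p i) T
      obtain ⟨h1, h2, h3, h4⟩ := hv
      have hvX : LevelValid (node a (leaf p i) T) := ⟨h1, h2, h3, h4⟩
      have hap : a < p := h1 p (by simp [seq])
      have hpq : p ≤ q := hqmax p (by simp [seq])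
      have haq : a < q := lt_of_lt_of_le hap hpq
      have hqa : q ≠ a := by omega
      have hqmem : q = p ∨ q ∈ seq T := by
        simp [seq] at hq; tauto
      have hjmem : j = i ∨ j ∈ nums T := by
        simp [nums] at hj; tauto
      show ∃ X₂, Rch (node a (leaf p i) T) (node a (leaf q j) X₂) ∧ IsComb X₂
      cases hT with
      | leaf c h =>
        -- X = node a (leaf p i) (leaf c h)
        have hac : a < c := h2 c (by simp [seq])
        have hvsw : LevelValid (node a (leaf c h) (leaf p i)) := ⟨h2, h1, trivial, trivial⟩
        have hvic : LevelValid (node a (leaf c i) (leaf p h)) := by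
          refine ⟨?_, ?_, trivial, trivial⟩ <;> (intro x hx; simp [seq] at hx; omega)
        have hvph : LevelValid (node a (leaf p h) (leaf c i)) := by
          refine ⟨?_, ?_, trivial, trivial⟩ <;> (intro x hx; simp [seq] at hx; omega)
        have mi : Move (node a (leaf p i) (leaf c h)) (node a (leaf c i) (leaf p h)) := by
          have := Move.interchange a (leaf p i) (leaf c h)
          simpa [setLvl, rootLvl] using this
        have hqpc : q = p ∨ q = c := by
          rcases hqmem with h' | h'
          · exact Or.inl h'
          · simp [seq] at h'; tauto
        have hjih : j = i ∨ j = h := by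
          rcases hjmem with h' | h'
          · exact Or.inl h'
          · simp [nums] at h'; tauto
        rcases hqpc with rfl | rfl <;> rcases hjih with rfl | rfl
        · exact ⟨leaf c h, Relation.ReflTransGen.refl, IsComb.leaf c h⟩
        · -- q = p, j = h : interchange then swap
          exact ⟨leaf c i, Rch.trans (Rch.single ⟨mi, hvX, hvic⟩)
            (Rch.single ⟨Move.swap a _ _, hvic, hvph⟩), IsComb.leaf c i⟩
        · -- q = c, j = i : interchange
          exact ⟨leaf p h, Rch.single ⟨mi, hvX, hvic⟩, IsComb.leaf p h⟩
        · -- q = c, j = h : swap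
          exact ⟨leaf p i, Rch.single ⟨Move.swap a _ _, hvX, hvsw⟩, IsComb.leaf p i⟩
      | @node b w j₂ T₂ hT₂ =>
        -- X = node a (leaf p i) (node b (leaf w j₂) T₂)
        have hvT : LevelValid (node b (leaf w j₂) T₂) := h4
        have hbw : b < w := h4.1 w (by simp [seq])
        have hwq : w ≤ q := hqmax w (by simp [seq])
        have hbq : b < q := lt_of_lt_of_le hbw hwq
        have hqb : q ≠ b := by omega
        have hpbne : p ≠ b :=
          nodup_node_ne (k := a) hnd (X := leaf p i) (Y := node b (leaf w j₂) T₂)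
            (show p ∈ seq (leaf p i) by simp [seq]) (show b ∈ seq (node b (leaf w j₂) T₂) by simp [seq])
        have hndT : (seq (node b (leaf w j₂) T₂)).Nodup := nodup_right hnd
        have hcntT : leafCount (node b (leaf w j₂) T₂) ≤ N := by
          simp [leafCount] at hN ⊢; omega
        have hcnt2 : 2 ≤ leafCount (node b (leaf w j₂) T₂) := by
          have := leafCount_pos T₂; simp [leafCount]; omega
        have hqmaxT : ∀ m ∈ seq (node b (leaf w j₂) T₂), m ≤ q := by
          intro m hm; exact hqmax m (by simp [seq] at hm ⊢; tauto)
        rcases hqmem with rfl | hqT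
        · -- q = p (the first leaf already carries the maximal level)
          rcases hjmem with rfl | hjT
          · exact ⟨node b (leaf w j₂) T₂, Relation.ReflTransGen.refl, IsComb.node _ _ _ hT₂⟩
          · -- change the number : bring (maxT, j) to front of T, then numswap
            obtain ⟨q', hq'mem, hq'max⟩ := exists_max (seq_ne_nil (node b (leaf w j₂) T₂))
            obtain ⟨T₂', hrchT, hcombT⟩ := ih (node b (leaf w j₂) T₂) hcntT hvT hndT
              (IsComb.node _ _ _ hT₂) hcnt2 q' j hq'mem hq'max hjT
            have hlift : Rch (node a (leaf q i) (node b (leaf w j₂) T₂))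
                (node a (leaf q i) (node b (leaf q' j) T₂')) := by
              have := Rch.liftR a (leaf q i) hrchT hvX
              simpa [rootLvl] using this
            have hv' : LevelValid (node a (leaf q i) (node b (leaf q' j) T₂')) :=
              Rch.valid hvX hlift
            exact ⟨node b (leaf q' i) T₂',
              Rch.trans hlift (numswap hbq hv'),
              IsComb.node _ _ _ hcombT⟩
        · -- q ∈ seq T
          rcases hjmem with rfl | hjT
          · -- j = i sits at the front: extract (q, j') from T, leafswap, then numswap
            obtain ⟨j', hj'⟩ := List.exists_mem_of_ne_nil _ (nums_ne_nil (node b (leaf w j₂) T₂))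
            obtain ⟨T₂', hrchT, hcombT⟩ := ih (node b (leaf w j₂) T₂) hcntT hvT hndT
              (IsComb.node _ _ _ hT₂) hcnt2 q j' hqT hqmaxT hj'
            have hlift : Rch (node a (leaf p j) (node b (leaf w j₂) T₂))
                (node a (leaf p j) (node b (leaf q j') T₂')) := by
              have := Rch.liftR a (leaf p j) hrchT hvX
              simpa [rootLvl] using this
            have hv' : LevelValid (node a (leaf p j) (node b (leaf q j') T₂')) :=
              Rch.valid hvX hlift
            obtain ⟨b', p', hsw⟩ := leafswap hpbne hv'
            have hchain : Rch (node a (leaf p j) (node b (leaf w j₂) T₂))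
                (node a (leaf q j') (node b' (leaf p' j) T₂')) := Rch.trans hlift hsw
            have hv'' : LevelValid (node a (leaf q j') (node b' (leaf p' j) T₂')) :=
              Rch.valid hvX hchain
            have hnd'' : (seq (node a (leaf q j') (node b' (leaf p' j) T₂'))).Nodup :=
              nodup_of_rch hchain hnd
            have hb'q : b' < q := by
              have hne : q ≠ b' := nodup_node_ne (k := a) hnd''
                (X := leaf q j') (Y := node b' (leaf p' j) T₂')
                (show q ∈ seq (leaf q j') by simp [seq])
                (show b' ∈ seq (node b' (leaf p' j) T₂') by simp [seq])
              have hle : b' ≤ q := by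
                refine hqmax b' ?_
                have := (Rch.seq_perm hchain).mem_iff.mpr
                  (show b' ∈ seq (node a (leaf q j') (node b' (leaf p' j) T₂')) by simp [seq])
                exact this
              omega
            exact ⟨node b' (leaf p' j') T₂',
              Rch.trans hchain (numswap hb'q hv''),
              IsComb.node _ _ _ hcombT⟩
          · -- j in T : extract (q, j) from T then leafswap
            obtain ⟨T₂', hrchT, hcombT⟩ := ih (node b (leaf w j₂) T₂) hcntT hvT hndT
              (IsComb.node _ _ _ hT₂) hcnt2 q j hqT hqmaxT hjT
            have hlift : Rch (node a (leaf p i) (node b (leaf w j₂) T₂))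
                (node a (leaf p i) (node b (leaf q j) T₂')) := by
              have := Rch.liftR a (leaf p i) hrchT hvX
              simpa [rootLvl] using this
            have hv' : LevelValid (node a (leaf p i) (node b (leaf q j) T₂')) :=
              Rch.valid hvX hlift
            obtain ⟨b', p', hsw⟩ := leafswap hpbne hv'
            exact ⟨node b' (leaf p' i) T₂', Rch.trans hlift hsw,
              IsComb.node _ _ _ hcombT⟩

lemma comb_connected : ∀ N : ℕ, ∀ X Y : QTree, leafCount X ≤ N →
    LevelValid X → LevelValid Y → (seq X).Nodup → IsComb X → IsComb Y →
    (seq X).Perm (seq Y) → (nums X).Perm (nums Y) → Rch X Y := by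
  intro N
  induction N with
  | zero => intro X Y hN; have := leafCount_pos X; omega
  | succ N ih =>
    intro X Y hN hvX hvY hnd hX hY hseq hnums
    have hcount : leafCount X = leafCount Y := by
      have := hnums.length_eq
      rw [length_nums, length_nums] at this
      exact this
    cases hX with
    | leaf k i =>
      cases hY with
      | leaf k' i' =>
        have hk : k' = k := by
          have := hseq.mem_iff.mpr (show k' ∈ seq (leaf k' i') by simp [seq])
          simpa [seq] using this
        have hi : i' = i := by
          have := hnums.mem_iff.mpr (show i' ∈ nums (leaf k' i') by simp [nums])
          simpa [nums] using this
        rw [hk, hi]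
        exact Relation.ReflTransGen.refl
      | @node a₂ p₂ i₂ Y₁ hY₁ =>
        exfalso
        have := leafCount_pos Y₁
        simp [leafCount] at hcount
        omega
    | @node a p i X₁ hX₁ =>
      cases hY with
      | leaf k' i' =>
        exfalso
        have := leafCount_pos X₁
        simp [leafCount] at hcount
        omega
      | @node a₂ p₂ i₂ Y₁ hY₁ =>
        have hndY : (seq (node a₂ (leaf p₂ i₂) Y₁)).Nodup := hseq.nodup_iff.mp hnd
        have hcnt2X : 2 ≤ leafCount (node a (leaf p i) X₁) := by
          have := leafCount_pos X₁; simp [leafCount]; omega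
        have hcnt2Y : 2 ≤ leafCount (node a₂ (leaf p₂ i₂) Y₁) := by
          have := leafCount_pos Y₁; simp [leafCount]; omega
        obtain ⟨q, hqmem, hqmax⟩ := exists_max (seq_ne_nil (node a (leaf p i) X₁))
        obtain ⟨j, hjmem⟩ := List.exists_mem_of_ne_nil _ (nums_ne_nil (node a (leaf p i) X₁))
        obtain ⟨X₂, hRX, hcombX₂⟩ := extract (leafCount (node a (leaf p i) X₁)) _ le_rfl
          hvX hnd (IsComb.node _ _ _ hX₁) hcnt2X q j hqmem hqmax hjmem
        obtain ⟨Y₂, hRY, hcombY₂⟩ := extract (leafCount (node a₂ (leaf p₂ i₂) Y₁)) _ le_rfl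
          hvY hndY (IsComb.node _ _ _ hY₁) hcnt2Y q j
          (hseq.mem_iff.mp hqmem)
          (fun m hm => hqmax m (hseq.mem_iff.mpr hm))
          (hnums.mem_iff.mp hjmem)
        have haa : a = a₂ := by
          have h1 : rootLvl (node a (leaf p i) X₁) ≤ a₂ :=
            rootLvl_le_seq hvX a₂ (hseq.mem_iff.mpr (rootLvl_mem_seq (node a₂ (leaf p₂ i₂) Y₁)))
          have h2 : rootLvl (node a₂ (leaf p₂ i₂) Y₁) ≤ a :=
            rootLvl_le_seq hvY a (hseq.mem_iff.mp (rootLvl_mem_seq (node a (leaf p i) X₁)))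
          simp [rootLvl] at h1 h2
          omega
        subst haa
        simp only [rootLvl] at hRX hRY
        -- data of the tails
        have hvX' : LevelValid (node a (leaf q j) X₂) := Rch.valid hvX hRX
        have hvY' : LevelValid (node a (leaf q j) Y₂) := Rch.valid hvY hRY
        have hseq' : (seq X₂).Perm (seq Y₂) := by
          have h1 : (seq (node a (leaf q j) X₂)).Perm (seq (node a (leaf q j) Y₂)) :=
            ((Rch.seq_perm hRX).symm.trans hseq).trans (Rch.seq_perm hRY)
          have h2 : (q :: a :: seq X₂).Perm (q :: a :: seq Y₂) := by
            simpa [seq] using h1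
          exact (h2.cons_inv).cons_inv
        have hnums' : (nums X₂).Perm (nums Y₂) := by
          have h1 : (nums (node a (leaf q j) X₂)).Perm (nums (node a (leaf q j) Y₂)) :=
            ((Rch.nums_perm hRX).symm.trans hnums).trans (Rch.nums_perm hRY)
          have h2 : (j :: nums X₂).Perm (j :: nums Y₂) := by
            simpa [nums] using h1
          exact h2.cons_inv
        have hndX₂ : (seq X₂).Nodup := nodup_right (nodup_of_rch hRX hnd)
        have hcntX₂ : leafCount X₂ ≤ N := by
          have := Rch.leafCount_eq hRX
          simp [leafCount] at this hN
          have := leafCount_pos X₁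
          omega
        have hmid : Rch X₂ Y₂ := ih X₂ Y₂ hcntX₂ hvX'.2.2.2 hvY'.2.2.2 hndX₂
          hcombX₂ hcombY₂ hseq' hnums'
        exact Rch.trans hRX (Rch.trans (Rch.liftR a (leaf q j) hmid hvX') (Rch.symm hRY))

lemma rch_to_moveNRB {n : ℕ} {s t : QTree} (hs : IsNRB n s) (h : Rch s t) :
    Relation.ReflTransGen (MoveNRB n) s t := by
  induction h with
  | refl => exact Relation.ReflTransGen.refl
  | @tail b c hsb hbc ih =>
    have hb : IsNRB n b :=
      ⟨(Rch.leafCount_eq hsb).symm.trans hs.1, (Rch.seq_perm hsb).symm.trans hs.2.1,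
        Rch.valid hs.2.2.1 hsb, (Rch.nums_perm hsb).symm.trans hs.2.2.2⟩
    have hc : IsNRB n c :=
      ⟨hbc.1.leafCount_eq.symm.trans hb.1, hbc.1.seq_perm.symm.trans hb.2.1,
        hbc.2.2, hbc.1.nums_perm.symm.trans hb.2.2.2⟩
    exact Relation.ReflTransGen.tail ih ⟨hbc.1, hb, hc⟩
end QTree


/-- Any two numbered resolved binary trees of length `n` are connected by a
finite sequence of primitive arrows (RB-tree moves together with subtree swaps
at internal nodes). -/
theorem nrb_connected (n : ℕ) (s t : QTree)
    (hs : QTree.IsNRB n s) (ht : QTree.IsNRB n t) :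
    Relation.ReflTransGen (QTree.MoveNRB n) s t := by
  obtain ⟨hcs, hseqs, hvs, hnumss⟩ := hs
  obtain ⟨hct, hseqt, hvt, hnumst⟩ := ht
  have hnds : (QTree.seq s).Nodup := hseqs.nodup_iff.mpr List.nodup_range
  have hndt : (QTree.seq t).Nodup := hseqt.nodup_iff.mpr List.nodup_range
  obtain ⟨cs, hRs, hcombs⟩ := QTree.combify s hvs hnds
  obtain ⟨ct, hRt, hcombt⟩ := QTree.combify t hvt hndt
  have hseq : (QTree.seq cs).Perm (QTree.seq ct) :=
    ((QTree.Rch.seq_perm hRs).symm.trans (hseqs.trans hseqt.symm)).trans (QTree.Rch.seq_perm hRt)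
  have hnums : (QTree.nums cs).Perm (QTree.nums ct) :=
    ((QTree.Rch.nums_perm hRs).symm.trans (hnumss.trans hnumst.symm)).trans
      (QTree.Rch.nums_perm hRt)
  have hconn : QTree.Rch cs ct :=
    QTree.comb_connected (QTree.leafCount cs) cs ct le_rfl
      (QTree.Rch.valid hvs hRs) (QTree.Rch.valid hvt hRt)
      (QTree.nodup_of_rch hRs hnds) hcombs hcombt hseq hnums
  have htotal : QTree.Rch s t :=
    QTree.Rch.trans hRs (QTree.Rch.trans hconn (QTree.Rch.symm hRt))
  exact QTree.rch_to_moveNRB ⟨hcs, hseqs, hvs, hnumss⟩ htotal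
end

section
/- In a unital pseudomonoidal category (C, \otimes, \mathfrak{a}, \mathfrak{l}, \mathfrak{r}, e) in which all triangle diagrams T, T_l, T_r hold, the deformation automorphism satisfies \mathfrak{q}_{\alpha,\beta,\gamma,\delta} = 1_{(\alpha\otimes\beta)\otimes(\gamma\otimes\delta)} whenever any one of \alpha, \beta, \gamma, \delta equals the identity object e. -/
open CategoryTheory

/-- In a unital pseudomonoidal category in which the triangle diagrams `T`,
`T_l`, `T_r` all hold, the deformation automorphism `q` (defined by the
`q`-Pentagon) is the identity whenever any one of its four indices is the
identity object `e`. -/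
theorem q_eq_id_of_unit_index {C : Type*} [Category C]
    (t : C → C → C)
    (tmap : ∀ {X₁ X₂ Y₁ Y₂ : C}, (X₁ ⟶ Y₁) → (X₂ ⟶ Y₂) → (t X₁ X₂ ⟶ t Y₁ Y₂))
    -- `⊗` is a bifunctor:
    (tmap_id : ∀ X Y : C, tmap (𝟙 X) (𝟙 Y) = 𝟙 (t X Y))
    (tmap_comp : ∀ {X₁ X₂ Y₁ Y₂ Z₁ Z₂ : C} (f₁ : X₁ ⟶ Y₁) (f₂ : X₂ ⟶ Y₂)
      (g₁ : Y₁ ⟶ Z₁) (g₂ : Y₂ ⟶ Z₂),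
      tmap (f₁ ≫ g₁) (f₂ ≫ g₂) = tmap f₁ f₂ ≫ tmap g₁ g₂)
    (a : ∀ X Y Z : C, t (t X Y) Z ≅ t X (t Y Z))
    -- naturality of `a`:
    (a_nat : ∀ {X Y Z X' Y' Z' : C} (f : X ⟶ X') (g : Y ⟶ Y') (h : Z ⟶ Z'),
      tmap (tmap f g) h ≫ (a X' Y' Z').hom = (a X Y Z).hom ≫ tmap f (tmap g h))
    (e : C) (l : ∀ X : C, t e X ≅ X) (r : ∀ X : C, t X e ≅ X)
    -- naturality of `l` and `r`:
    (l_nat : ∀ {X X' : C} (f : X ⟶ X'), tmap (𝟙 e) f ≫ (l X').hom = (l X).hom ≫ f)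
    (r_nat : ∀ {X X' : C} (f : X ⟶ X'), tmap f (𝟙 e) ≫ (r X').hom = (r X).hom ≫ f)
    -- the triangle diagram `T`:
    (hT : ∀ X Y : C, (a X e Y).hom ≫ tmap (𝟙 X) (l Y).hom = tmap (r X).hom (𝟙 Y))
    -- the triangle diagram `T_l`:
    (hTl : ∀ X Y : C, (a e X Y).hom ≫ (l (t X Y)).hom = tmap (l X).hom (𝟙 Y))
    -- the triangle diagram `T_r`:
    (hTr : ∀ X Y : C, (a X Y e).hom ≫ tmap (𝟙 X) (r Y).hom = (r (t X Y)).hom) :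
    -- `q`, defined by the `q`-Pentagon, is the identity whenever an index is `e`:
    ∀ W X Y Z : C,
      (W = e ∨ X = e ∨ Y = e ∨ Z = e) →
      (a (t W X) Y Z).inv ≫ tmap (a W X Y).hom (𝟙 Z) ≫ (a W (t X Y) Z).hom ≫
          tmap (𝟙 W) (a X Y Z).hom ≫ (a W X (t Y Z)).inv =
        𝟙 (t (t W X) (t Y Z)) := by
  intro W X Y Z h
  have key : tmap (a W X Y).hom (𝟙 Z) ≫ (a W (t X Y) Z).hom ≫ tmap (𝟙 W) (a X Y Z).hom
      = (a (t W X) Y Z).hom ≫ (a W X (t Y Z)).hom := by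
    rcases h with rfl | rfl | rfl | rfl
    · -- W is the unit
      rw [← cancel_mono (l (t X (t Y Z))).hom]
      calc (tmap (a W X Y).hom (𝟙 Z) ≫ (a W (t X Y) Z).hom ≫ tmap (𝟙 W) (a X Y Z).hom)
            ≫ (l (t X (t Y Z))).hom
          = tmap (a W X Y).hom (𝟙 Z) ≫ (a W (t X Y) Z).hom ≫
              (tmap (𝟙 W) (a X Y Z).hom ≫ (l (t X (t Y Z))).hom) := by
            simp only [Category.assoc]
        _ = tmap (a W X Y).hom (𝟙 Z) ≫
              ((a W (t X Y) Z).hom ≫ (l (t (t X Y) Z)).hom) ≫ (a X Y Z).hom := by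
            rw [l_nat]; simp only [Category.assoc]
        _ = tmap (a W X Y).hom (𝟙 Z) ≫ tmap (l (t X Y)).hom (𝟙 Z) ≫ (a X Y Z).hom := by
            rw [hTl]
        _ = tmap ((a W X Y).hom ≫ (l (t X Y)).hom) (𝟙 Z ≫ 𝟙 Z) ≫ (a X Y Z).hom := by
            rw [tmap_comp]; simp only [Category.assoc]
        _ = tmap (tmap (l X).hom (𝟙 Y)) (𝟙 Z) ≫ (a X Y Z).hom := by
            rw [hTl, Category.comp_id]
        _ = (a (t W X) Y Z).hom ≫ tmap (l X).hom (tmap (𝟙 Y) (𝟙 Z)) := a_nat _ _ _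
        _ = (a (t W X) Y Z).hom ≫ ((a W X (t Y Z)).hom ≫ (l (t X (t Y Z))).hom) := by
            rw [tmap_id, hTl]
        _ = ((a (t W X) Y Z).hom ≫ (a W X (t Y Z)).hom) ≫ (l (t X (t Y Z))).hom := by
            simp only [Category.assoc]
    · -- X is the unit
      haveI : IsIso (tmap (𝟙 W) (l (t Y Z)).hom) :=
        ⟨tmap (𝟙 W) (l (t Y Z)).inv, by rw [← tmap_comp]; simp [tmap_id],
          by rw [← tmap_comp]; simp [tmap_id]⟩
      rw [← cancel_mono (tmap (𝟙 W) (l (t Y Z)).hom)]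
      calc (tmap (a W X Y).hom (𝟙 Z) ≫ (a W (t X Y) Z).hom ≫ tmap (𝟙 W) (a X Y Z).hom)
            ≫ tmap (𝟙 W) (l (t Y Z)).hom
          = tmap (a W X Y).hom (𝟙 Z) ≫ (a W (t X Y) Z).hom ≫
              (tmap (𝟙 W) (a X Y Z).hom ≫ tmap (𝟙 W) (l (t Y Z)).hom) := by
            simp only [Category.assoc]
        _ = tmap (a W X Y).hom (𝟙 Z) ≫ (a W (t X Y) Z).hom ≫
              tmap (𝟙 W) (tmap (l Y).hom (𝟙 Z)) := by
            rw [← tmap_comp, Category.id_comp, hTl]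
        _ = tmap (a W X Y).hom (𝟙 Z) ≫
              tmap (tmap (𝟙 W) (l Y).hom) (𝟙 Z) ≫ (a W Y Z).hom := by
            rw [a_nat]
        _ = tmap ((a W X Y).hom ≫ tmap (𝟙 W) (l Y).hom) (𝟙 Z ≫ 𝟙 Z) ≫ (a W Y Z).hom := by
            rw [tmap_comp]; simp only [Category.assoc]
        _ = tmap (tmap (r W).hom (𝟙 Y)) (𝟙 Z) ≫ (a W Y Z).hom := by
            rw [hT, Category.comp_id]
        _ = (a (t W X) Y Z).hom ≫ tmap (r W).hom (tmap (𝟙 Y) (𝟙 Z)) := a_nat _ _ _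
        _ = (a (t W X) Y Z).hom ≫ ((a W X (t Y Z)).hom ≫ tmap (𝟙 W) (l (t Y Z)).hom) := by
            rw [tmap_id, hT]
        _ = ((a (t W X) Y Z).hom ≫ (a W X (t Y Z)).hom) ≫ tmap (𝟙 W) (l (t Y Z)).hom := by
            simp only [Category.assoc]
    · -- Y is the unit
      haveI : IsIso (tmap (𝟙 W) (tmap (𝟙 X) (l Z).hom)) :=
        ⟨tmap (𝟙 W) (tmap (𝟙 X) (l Z).inv), by rw [← tmap_comp, ← tmap_comp]; simp [tmap_id],
          by rw [← tmap_comp, ← tmap_comp]; simp [tmap_id]⟩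
      rw [← cancel_mono (tmap (𝟙 W) (tmap (𝟙 X) (l Z).hom))]
      calc (tmap (a W X Y).hom (𝟙 Z) ≫ (a W (t X Y) Z).hom ≫ tmap (𝟙 W) (a X Y Z).hom)
            ≫ tmap (𝟙 W) (tmap (𝟙 X) (l Z).hom)
          = tmap (a W X Y).hom (𝟙 Z) ≫ (a W (t X Y) Z).hom ≫
              (tmap (𝟙 W) (a X Y Z).hom ≫ tmap (𝟙 W) (tmap (𝟙 X) (l Z).hom)) := by
            simp only [Category.assoc]
        _ = tmap (a W X Y).hom (𝟙 Z) ≫ (a W (t X Y) Z).hom ≫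
              tmap (𝟙 W) (tmap (r X).hom (𝟙 Z)) := by
            rw [← tmap_comp, Category.id_comp, hT]
        _ = tmap (a W X Y).hom (𝟙 Z) ≫
              tmap (tmap (𝟙 W) (r X).hom) (𝟙 Z) ≫ (a W X Z).hom := by
            rw [a_nat]
        _ = tmap ((a W X Y).hom ≫ tmap (𝟙 W) (r X).hom) (𝟙 Z ≫ 𝟙 Z) ≫ (a W X Z).hom := by
            rw [tmap_comp]; simp only [Category.assoc]
        _ = tmap (r (t W X)).hom (𝟙 Z) ≫ (a W X Z).hom := by
            rw [hTr, Category.comp_id]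
        _ = (a (t W X) Y Z).hom ≫ tmap (𝟙 (t W X)) (l Z).hom ≫ (a W X Z).hom := by
            rw [← Category.assoc, hT]
        _ = (a (t W X) Y Z).hom ≫ tmap (tmap (𝟙 W) (𝟙 X)) (l Z).hom ≫ (a W X Z).hom := by
            rw [tmap_id]
        _ = (a (t W X) Y Z).hom ≫ (a W X (t Y Z)).hom ≫ tmap (𝟙 W) (tmap (𝟙 X) (l Z).hom) := by
            rw [a_nat]
        _ = ((a (t W X) Y Z).hom ≫ (a W X (t Y Z)).hom) ≫ tmap (𝟙 W) (tmap (𝟙 X) (l Z).hom) := by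
            simp only [Category.assoc]
    · -- Z is the unit
      haveI : IsIso (tmap (𝟙 W) (tmap (𝟙 X) (r Y).hom)) :=
        ⟨tmap (𝟙 W) (tmap (𝟙 X) (r Y).inv), by rw [← tmap_comp, ← tmap_comp]; simp [tmap_id],
          by rw [← tmap_comp, ← tmap_comp]; simp [tmap_id]⟩
      rw [← cancel_mono (tmap (𝟙 W) (tmap (𝟙 X) (r Y).hom))]
      calc (tmap (a W X Y).hom (𝟙 Z) ≫ (a W (t X Y) Z).hom ≫ tmap (𝟙 W) (a X Y Z).hom)
            ≫ tmap (𝟙 W) (tmap (𝟙 X) (r Y).hom)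
          = tmap (a W X Y).hom (𝟙 Z) ≫ (a W (t X Y) Z).hom ≫
              (tmap (𝟙 W) (a X Y Z).hom ≫ tmap (𝟙 W) (tmap (𝟙 X) (r Y).hom)) := by
            simp only [Category.assoc]
        _ = tmap (a W X Y).hom (𝟙 Z) ≫ (a W (t X Y) Z).hom ≫
              tmap (𝟙 W) (r (t X Y)).hom := by
            rw [← tmap_comp, Category.id_comp, hTr]
        _ = tmap (a W X Y).hom (𝟙 Z) ≫ (r (t W (t X Y))).hom := by
            rw [hTr]
        _ = (r (t (t W X) Y)).hom ≫ (a W X Y).hom := r_nat _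
        _ = (a (t W X) Y Z).hom ≫ tmap (𝟙 (t W X)) (r Y).hom ≫ (a W X Y).hom := by
            rw [← Category.assoc, hTr]
        _ = (a (t W X) Y Z).hom ≫ tmap (tmap (𝟙 W) (𝟙 X)) (r Y).hom ≫ (a W X Y).hom := by
            rw [tmap_id]
        _ = (a (t W X) Y Z).hom ≫ (a W X (t Y Z)).hom ≫ tmap (𝟙 W) (tmap (𝟙 X) (r Y).hom) := by
            rw [a_nat]
        _ = ((a (t W X) Y Z).hom ≫ (a W X (t Y Z)).hom) ≫ tmap (𝟙 W) (tmap (𝟙 X) (r Y).hom) := by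
            simp only [Category.assoc]
  rw [show tmap (a W X Y).hom (𝟙 Z) ≫ (a W (t X Y) Z).hom ≫ tmap (𝟙 W) (a X Y Z).hom ≫
        (a W X (t Y Z)).inv
      = (tmap (a W X Y).hom (𝟙 Z) ≫ (a W (t X Y) Z).hom ≫ tmap (𝟙 W) (a X Y Z).hom) ≫
        (a W X (t Y Z)).inv from by simp only [Category.assoc], key]
  simp
end
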